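/- arXiv:2009.08533 — 8 statements merged into one kernel-verified Lean document; each statement's English description precedes it below -/
import Mathlib

section
/- Let d ≥ 2 and suppose the functions g, f_1,…,f_d and f_{ij} (i ≠ j) defining the matrix field c are continuously differentiable (for d = 2 the f_{ij} are constants). Then for every x ∈ Δ and every index i ∈ {1,…,d}, Σ_{j≠i} c_{ij}(x)·(∂_j − ∂_i)[log g + Σ_{k=1}^d log f_k(·^k)](x) = Σ_{j≠i} (∂_j − ∂_i) c_{ij}(x); that is, c(x) ∇log( g(x) ∏_{i=1}^d f_i(x^i) ) = div c(x) at every point of Δ. -/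
open scoped BigOperators

/-- The open unit simplex in `ℝ^d`. -/
def openSimplex (d : ℕ) : Set (Fin d → ℝ) :=
  {x | (∀ i, 0 < x i) ∧ ∑ i, x i = 1}

/-- Directional derivative `(∂_j - ∂_i) h (x)`, i.e. the derivative of `h` at `x`
along the direction `e_j - e_i`, which is tangent to the simplex. -/
noncomputable def dirDeriv {d : ℕ} (h : (Fin d → ℝ) → ℝ) (x : Fin d → ℝ)
    (i j : Fin d) : ℝ :=
  fderiv ℝ h x (Pi.single j 1 - Pi.single i 1)

/-- The tractable volatility matrix field:
`c_{ij}(x) = -F_{ij}(x) f_i(x^i) f_j(x^j) g(x)` for `i ≠ j` and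
`c_{ii}(x) = ∑_{k ≠ i} F_{ik}(x) f_i(x^i) f_k(x^k) g(x)`.  Here `F i j x` models
`f_{ij}(x^{-ij})`: a function that only depends on the coordinates of `x` other
than `i` and `j` (this dependency restriction is imposed as a hypothesis). -/
noncomputable def cMat {d : ℕ} (g : (Fin d → ℝ) → ℝ) (f : Fin d → ℝ → ℝ)
    (F : Fin d → Fin d → (Fin d → ℝ) → ℝ) (i j : Fin d) (x : Fin d → ℝ) : ℝ :=
  if i = j then
    ∑ k ∈ Finset.univ.filter (fun k => k ≠ i), F i k x * f i (x i) * f k (x k) * g x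
  else -(F i j x * f i (x i) * f j (x j) * g x)

/-! Fix `j ≠ i` and write `v = e_j - e_i`. Off the diagonal `c_{ij} = -F_{ij} · f_i(x^i) f_j(x^j) g`,
and `F_{ij}` is constant along `v` because it ignores coordinates `i` and `j`; so the product rule
gives `∂_v c_{ij} = c_{ij} · ∂_v log (f_i(x^i) f_j(x^j) g)`. Along `v` the other summands
`log f_k(x^k)` are constant, hence this is `c_{ij} · ∂_v log (g ∏_k f_k(x^k))`, term by term. -/

open Finset

lemma fderiv_apply_eq_zero_of_forall_add_smul_eq {𝕜 E F : Type*} [NontriviallyNormedField 𝕜]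
    [NormedAddCommGroup E] [NormedSpace 𝕜 E] [NormedAddCommGroup F] [NormedSpace 𝕜 F]
    {f : E → F} {x v : E} (h : ∀ t : 𝕜, f (x + t • v) = f x) : fderiv 𝕜 f x v = 0 := by
  by_cases hf : DifferentiableAt 𝕜 f x
  · rw [← hf.lineDeriv_eq_fderiv]
    simp [lineDeriv, h]
  · simp [fderiv_zero_of_not_differentiableAt hf]

lemma fderiv_single_sub_single_eq_zero {𝕜 ι F : Type*} [NontriviallyNormedField 𝕜]
    [NormedAddCommGroup F] [NormedSpace 𝕜 F] [Fintype ι] [DecidableEq ι]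
    {f : (ι → 𝕜) → F} {i j : ι}
    (hf : ∀ x y : ι → 𝕜, (∀ k, k ≠ i → k ≠ j → x k = y k) → f x = f y) (x : ι → 𝕜) :
    fderiv 𝕜 f x (Pi.single j 1 - Pi.single i 1) = 0 :=
  fderiv_apply_eq_zero_of_forall_add_smul_eq fun t =>
    (hf _ _ fun k hki hkj => by simp [hki, hkj]).symm

lemma mem_Ioo_of_mem_openSimplex {d : ℕ} (hd : 2 ≤ d) {x : Fin d → ℝ} (hx : x ∈ openSimplex d)
    (k : Fin d) : x k ∈ Set.Ioo 0 1 := by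
  have : Nontrivial (Fin d) := Fin.nontrivial_iff_two_le.2 hd
  obtain ⟨l, hlk⟩ := exists_ne k
  have hkl := add_le_sum (fun m _ => (hx.1 m).le) (mem_univ k) (mem_univ l) hlk.symm
  exact ⟨hx.1 k, by linarith [hx.1 l, hx.2]⟩

lemma hasFDerivAt_comp_apply {𝕜 ι : Type*} [NontriviallyNormedField 𝕜] [Fintype ι]
    {φ : 𝕜 → 𝕜} {x : ι → 𝕜} {k : ι} (hφ : DifferentiableAt 𝕜 φ (x k)) :
    HasFDerivAt (fun y : ι → 𝕜 => φ (y k))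
      (deriv φ (x k) • ContinuousLinearMap.proj (R := 𝕜) (φ := fun _ : ι => 𝕜) k) x :=
  hφ.hasDerivAt.comp_hasFDerivAt x (hasFDerivAt_apply k x)

section

variable {d : ℕ} {g : (Fin d → ℝ) → ℝ} {f : Fin d → ℝ → ℝ} {x : Fin d → ℝ}

lemma dirDeriv_log_add_sum_log (hg : DifferentiableAt ℝ g x) (hgx : 0 < g x)
    (hf : ∀ k, DifferentiableAt ℝ (f k) (x k)) (hfx : ∀ k, 0 < f k (x k)) (i j : Fin d) :
    dirDeriv (fun y => Real.log (g y) + ∑ k, Real.log (f k (y k))) x i j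
      = fderiv ℝ g x (Pi.single j 1 - Pi.single i 1) / g x
        + deriv (f j) (x j) / f j (x j) - deriv (f i) (x i) / f i (x i) := by
  have hL : HasFDerivAt (fun y => Real.log (g y) + ∑ k, Real.log (f k (y k))) _ x :=
    (hg.hasFDerivAt.log hgx.ne').add
      (HasFDerivAt.fun_sum (u := univ) fun k _ => (hasFDerivAt_comp_apply (hf k)).log (hfx k).ne')
  rw [dirDeriv, hL.fderiv]
  simp only [add_apply, smul_apply, map_sub, smul_eq_mul, _root_.sum_apply,
    ContinuousLinearMap.proj_apply, Pi.single_apply, mul_ite, mul_one, mul_zero, sum_ite_eq',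
    mem_univ, ↓reduceIte]
  ring

lemma dirDeriv_cMat_of_ne {F : Fin d → Fin d → (Fin d → ℝ) → ℝ} {i j : Fin d} (hij : i ≠ j)
    (hg : DifferentiableAt ℝ g x) (hfi : DifferentiableAt ℝ (f i) (x i))
    (hfj : DifferentiableAt ℝ (f j) (x j)) (hF : DifferentiableAt ℝ (F i j) x)
    (hFdep : ∀ x y : Fin d → ℝ, (∀ k, k ≠ i → k ≠ j → x k = y k) → F i j x = F i j y) :
    dirDeriv (cMat g f F i j) x i j
      = -F i j x * (f i (x i) * f j (x j) * fderiv ℝ g x (Pi.single j 1 - Pi.single i 1)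
          + f i (x i) * deriv (f j) (x j) * g x - deriv (f i) (x i) * f j (x j) * g x) := by
  have hc : cMat g f F i j = fun y => -(F i j y * f i (y i) * f j (y j) * g y) := by
    funext y
    simp [cMat, hij]
  have hP : HasFDerivAt (fun y => -(F i j y * f i (y i) * f j (y j) * g y)) _ x :=
    (((hF.hasFDerivAt.mul (hasFDerivAt_comp_apply hfi)).mul (hasFDerivAt_comp_apply hfj)).mul
      hg.hasFDerivAt).neg
  have hF0 := fderiv_single_sub_single_eq_zero hFdep x
  rw [dirDeriv, hc, hP.fderiv]
  simp only [Pi.mul_apply, neg_apply, add_apply, smul_apply, hF0, smul_eq_mul,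
    ContinuousLinearMap.proj_apply, Pi.sub_apply, Pi.single_eq_of_ne hij,
    Pi.single_eq_of_ne hij.symm, Pi.single_eq_same]
  ring

lemma cMat_mul_dirDeriv_log_eq_dirDeriv_cMat {F : Fin d → Fin d → (Fin d → ℝ) → ℝ} {i j : Fin d}
    (hij : i ≠ j) (hg : DifferentiableAt ℝ g x) (hgx : 0 < g x)
    (hf : ∀ k, DifferentiableAt ℝ (f k) (x k)) (hfx : ∀ k, 0 < f k (x k))
    (hF : DifferentiableAt ℝ (F i j) x)
    (hFdep : ∀ x y : Fin d → ℝ, (∀ k, k ≠ i → k ≠ j → x k = y k) → F i j x = F i j y) :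
    cMat g f F i j x * dirDeriv (fun y => Real.log (g y) + ∑ k, Real.log (f k (y k))) x i j
      = dirDeriv (cMat g f F i j) x i j := by
  rw [dirDeriv_log_add_sum_log hg hgx hf hfx, dirDeriv_cMat_of_ne hij hg (hf i) (hf j) hF hFdep]
  simp only [cMat, if_neg hij]
  field_simp [(hfx i).ne', (hfx j).ne']

end

theorem statement0_general {d : ℕ} (hd : 2 ≤ d)
    (g : (Fin d → ℝ) → ℝ) (f : Fin d → ℝ → ℝ)
    (F : Fin d → Fin d → (Fin d → ℝ) → ℝ)
    (hg : ContDiff ℝ 1 g) (hf : ∀ i, ContDiff ℝ 1 (f i))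
    (hF : ∀ i j, ContDiff ℝ 1 (F i j))
    (hFdep : ∀ i j : Fin d, ∀ x y : Fin d → ℝ,
      (∀ k, k ≠ i → k ≠ j → x k = y k) → F i j x = F i j y)
    (hgpos : ∀ x ∈ openSimplex d, 0 < g x)
    (hfpos : ∀ i, ∀ t ∈ Set.Ioo (0:ℝ) 1, 0 < f i t) :
    ∀ x ∈ openSimplex d, ∀ i : Fin d,
      ∑ j ∈ Finset.univ.filter (fun j => j ≠ i),
        cMat g f F i j x *
          dirDeriv (fun y => Real.log (g y) + ∑ k, Real.log (f k (y k))) x i j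
        = ∑ j ∈ Finset.univ.filter (fun j => j ≠ i),
            dirDeriv (cMat g f F i j) x i j := by
  intro x hx i
  refine sum_congr rfl fun j hj => ?_
  exact cMat_mul_dirDeriv_log_eq_dirDeriv_cMat (mem_filter.1 hj).2.symm
    (hg.differentiable one_ne_zero x) (hgpos x hx)
    (fun k => (hf k).differentiable one_ne_zero _)
    (fun k => hfpos k _ (mem_Ioo_of_mem_openSimplex hd hx k))
    ((hF i j).differentiable one_ne_zero x) (hFdep i j)

/-- for the tractable volatility class with `C¹` ingredients,
`c(x) ∇ log (g(x) ∏_i f_i(x^i)) = div c (x)` at every point of the open simplex,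
where both sides are interpreted via the tangential directional derivatives
`(∂_j - ∂_i)`. -/
theorem statement0 {d : ℕ} (hd : 2 ≤ d)
    (g : (Fin d → ℝ) → ℝ) (f : Fin d → ℝ → ℝ)
    (F : Fin d → Fin d → (Fin d → ℝ) → ℝ)
    (hg : ContDiff ℝ 1 g) (hf : ∀ i, ContDiff ℝ 1 (f i))
    (hF : ∀ i j, ContDiff ℝ 1 (F i j))
    (hFsymm : ∀ i j, F i j = F j i)
    (hFdep : ∀ i j : Fin d, ∀ x y : Fin d → ℝ,
      (∀ k, k ≠ i → k ≠ j → x k = y k) → F i j x = F i j y)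
    (hgpos : ∀ x ∈ openSimplex d, 0 < g x)
    (hfpos : ∀ i, ∀ t ∈ Set.Ioo (0:ℝ) 1, 0 < f i t)
    (hFnn : ∀ i j : Fin d, i ≠ j → ∀ x ∈ openSimplex d, 0 ≤ F i j x) :
    ∀ x ∈ openSimplex d, ∀ i : Fin d,
      ∑ j ∈ Finset.univ.filter (fun j => j ≠ i),
        cMat g f F i j x *
          dirDeriv (fun y => Real.log (g y) + ∑ k, Real.log (f k (y k))) x i j
        = ∑ j ∈ Finset.univ.filter (fun j => j ≠ i),
            dirDeriv (cMat g f F i j) x i j :=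
  statement0_general hd g f F hg hf hF hFdep hgpos hfpos
end

section
/- For every x ∈ Δ and every v ∈ ℝ^d, vᵀ c(x) v = Σ_{1 ≤ j < i ≤ d} f_{ij}(x^{−ij}) f_i(x^i) f_j(x^j) g(x) (v^i − v^j)². In particular, c(x) is a symmetric positive semidefinite matrix and c(x)𝟙 = 0, where 𝟙 = (1,…,1) ∈ ℝ^d. -/
open scoped BigOperators

/-! `c(x)` is the Laplacian of the complete graph on the `d` coordinates with symmetric edge
weights `a_{ij} = f_{ij}(x^{-ij}) f_i(x^i) f_j(x^j) g(x)`, i.e. `c(x) = ∑_{j<i} a_{ij} (e_i - e_j)(e_i - e_j)ᵀ`.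
This gives the quadratic form, symmetry and `c(x) 𝟙 = 0`; positive semidefiniteness follows because
the weights are nonnegative on the simplex, where every coordinate lies in `(0, 1)`. -/

open Finset

theorem sum_sum_erase_eq_sum_sum_lt {ι M : Type*} [Fintype ι] [LinearOrder ι] [DecidableEq ι]
    [AddCommMonoid M] (t : ι → ι → M) :
    ∑ i, ∑ j ∈ univ.erase i, t i j = ∑ i, ∑ j ∈ univ.filter (· < i), (t i j + t j i) := by
  have split (i : ι) : univ.erase i = univ.filter (· < i) ∪ univ.filter (i < ·) := by
    ext j
    simp [lt_or_lt_iff_ne]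
  have swap : ∑ i, ∑ j ∈ univ.filter (i < ·), t i j = ∑ i, ∑ j ∈ univ.filter (· < i), t j i :=
    sum_comm' fun _ _ => by simp
  simp_rw [split, sum_union (disjoint_filter.2 fun _ _ => lt_asymm), sum_add_distrib, swap]

section WeightedLaplacian

variable {ι : Type*} [Fintype ι] [DecidableEq ι]

noncomputable def weightedLaplacian (a : ι → ι → ℝ) (i j : ι) : ℝ :=
  if i = j then ∑ k ∈ univ.filter (fun k => k ≠ i), a i k else -a i j

variable {a : ι → ι → ℝ}

theorem weightedLaplacian_self (i : ι) :
    weightedLaplacian a i i = ∑ k ∈ univ.erase i, a i k := by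
  rw [weightedLaplacian, if_pos rfl, filter_ne']

theorem weightedLaplacian_of_ne {i j : ι} (h : i ≠ j) : weightedLaplacian a i j = -a i j :=
  if_neg h

theorem weightedLaplacian_comm (ha : ∀ i j, a i j = a j i) (i j : ι) :
    weightedLaplacian a i j = weightedLaplacian a j i := by
  rcases eq_or_ne i j with rfl | h
  · rfl
  · rw [weightedLaplacian_of_ne h, weightedLaplacian_of_ne h.symm, ha]

theorem sum_weightedLaplacian_row (i : ι) : ∑ j, weightedLaplacian a i j = 0 := by
  rw [← add_sum_erase _ _ (mem_univ i), weightedLaplacian_self,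
    sum_congr rfl fun j hj => weightedLaplacian_of_ne (ne_of_mem_erase hj).symm,
    sum_neg_distrib, add_neg_cancel]

theorem sum_mul_weightedLaplacian_mul (v : ι → ℝ) (i : ι) :
    ∑ j, v i * weightedLaplacian a i j * v j
      = ∑ j ∈ univ.erase i, (a i j * v i ^ 2 - a i j * v i * v j) := by
  have off_diag : ∑ j ∈ univ.erase i, v i * weightedLaplacian a i j * v j
      = ∑ j ∈ univ.erase i, -(a i j * v i * v j) :=
    sum_congr rfl fun j hj => by rw [weightedLaplacian_of_ne (ne_of_mem_erase hj).symm]; ring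
  rw [← add_sum_erase _ _ (mem_univ i), off_diag, weightedLaplacian_self, mul_sum, sum_mul,
    ← sum_add_distrib]
  exact sum_congr rfl fun j _ => by ring

section LinearOrder

variable [LinearOrder ι]

theorem quadForm_weightedLaplacian (ha : ∀ i j, a i j = a j i) (v : ι → ℝ) :
    ∑ i, ∑ j, v i * weightedLaplacian a i j * v j
      = ∑ i, ∑ j ∈ univ.filter (· < i), a i j * (v i - v j) ^ 2 := by
  simp_rw [sum_mul_weightedLaplacian_mul, sum_sum_erase_eq_sum_sum_lt]
  exact sum_congr rfl fun i _ => sum_congr rfl fun j _ => by rw [ha j i]; ring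

theorem quadForm_weightedLaplacian_nonneg (ha : ∀ i j, a i j = a j i)
    (ha₀ : ∀ i j, i ≠ j → 0 ≤ a i j) (v : ι → ℝ) :
    0 ≤ ∑ i, ∑ j, v i * weightedLaplacian a i j * v j := by
  rw [quadForm_weightedLaplacian ha]
  refine sum_nonneg fun i _ => sum_nonneg fun j hj => mul_nonneg ?_ (sq_nonneg _)
  exact ha₀ i j (mem_filter.1 hj).2.ne'

end LinearOrder

end WeightedLaplacian

theorem lt_one_of_mem_openSimplex {d : ℕ} {x : Fin d → ℝ} (hx : x ∈ openSimplex d) {i j : Fin d}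
    (hij : i ≠ j) : x i < 1 :=
  calc x i < x i + x j := lt_add_of_pos_right _ (hx.1 j)
    _ = ∑ k ∈ {i, j}, x k := (sum_pair hij).symm
    _ ≤ ∑ k, x k := sum_le_sum_of_subset_of_nonneg (subset_univ _) fun k _ _ => (hx.1 k).le
    _ = 1 := hx.2

theorem cMat_eq_weightedLaplacian {d : ℕ} (g : (Fin d → ℝ) → ℝ) (f : Fin d → ℝ → ℝ)
    (F : Fin d → Fin d → (Fin d → ℝ) → ℝ) (x : Fin d → ℝ) (i j : Fin d) :
    cMat g f F i j x = weightedLaplacian (fun i j => F i j x * f i (x i) * f j (x j) * g x) i j :=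
  rfl

theorem statement1_general {d : ℕ}
    (g : (Fin d → ℝ) → ℝ) (f : Fin d → ℝ → ℝ)
    (F : Fin d → Fin d → (Fin d → ℝ) → ℝ)
    (hFsymm : ∀ i j, F i j = F j i)
    (hgpos : ∀ x ∈ openSimplex d, 0 < g x)
    (hfpos : ∀ i, ∀ t ∈ Set.Ioo (0:ℝ) 1, 0 < f i t)
    (hFnn : ∀ i j : Fin d, i ≠ j → ∀ x ∈ openSimplex d, 0 ≤ F i j x) :
    ∀ x ∈ openSimplex d,
      (∀ v : Fin d → ℝ,
        ∑ i, ∑ j, v i * cMat g f F i j x * v j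
          = ∑ i, ∑ j ∈ Finset.univ.filter (fun j => j < i),
              F i j x * f i (x i) * f j (x j) * g x * (v i - v j) ^ 2) ∧
      (∀ i j, cMat g f F i j x = cMat g f F j i x) ∧
      (∀ v : Fin d → ℝ, 0 ≤ ∑ i, ∑ j, v i * cMat g f F i j x * v j) ∧
      (∀ i, ∑ j, cMat g f F i j x = 0) := by
  intro x hx
  set a : Fin d → Fin d → ℝ := fun i j => F i j x * f i (x i) * f j (x j) * g x
  have ha : ∀ i j, a i j = a j i := fun i j => by simp only [a, hFsymm i j]; ring
  have ha₀ : ∀ i j, i ≠ j → 0 ≤ a i j := by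
    intro i j hij
    have := hFnn i j hij x hx
    have := hfpos i (x i) ⟨hx.1 i, lt_one_of_mem_openSimplex hx hij⟩
    have := hfpos j (x j) ⟨hx.1 j, lt_one_of_mem_openSimplex hx hij.symm⟩
    have := hgpos x hx
    positivity
  simp only [cMat_eq_weightedLaplacian]
  exact ⟨quadForm_weightedLaplacian ha, weightedLaplacian_comm ha,
    quadForm_weightedLaplacian_nonneg ha ha₀, sum_weightedLaplacian_row⟩

/-- the quadratic form of `c(x)`:
`vᵀ c(x) v = ∑_{j < i} f_{ij}(x^{-ij}) f_i(x^i) f_j(x^j) g(x) (v^i - v^j)²`.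
In particular `c(x)` is symmetric positive semidefinite and `c(x) 𝟙 = 0`. -/
theorem statement1 {d : ℕ} (hd : 2 ≤ d)
    (g : (Fin d → ℝ) → ℝ) (f : Fin d → ℝ → ℝ)
    (F : Fin d → Fin d → (Fin d → ℝ) → ℝ)
    (hFsymm : ∀ i j, F i j = F j i)
    (hFdep : ∀ i j : Fin d, ∀ x y : Fin d → ℝ,
      (∀ k, k ≠ i → k ≠ j → x k = y k) → F i j x = F i j y)
    (hgpos : ∀ x ∈ openSimplex d, 0 < g x)
    (hfpos : ∀ i, ∀ t ∈ Set.Ioo (0:ℝ) 1, 0 < f i t)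
    (hFnn : ∀ i j : Fin d, i ≠ j → ∀ x ∈ openSimplex d, 0 ≤ F i j x) :
    ∀ x ∈ openSimplex d,
      (∀ v : Fin d → ℝ,
        ∑ i, ∑ j, v i * cMat g f F i j x * v j
          = ∑ i, ∑ j ∈ Finset.univ.filter (fun j => j < i),
              F i j x * f i (x i) * f j (x j) * g x * (v i - v j) ^ 2) ∧
      (∀ i j, cMat g f F i j x = cMat g f F j i x) ∧
      (∀ v : Fin d → ℝ, 0 ≤ ∑ i, ∑ j, v i * cMat g f F i j x * v j) ∧
      (∀ i, ∑ j, cMat g f F i j x = 0) :=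
  statement1_general g f F hFsymm hgpos hfpos hFnn
end

section
/- Let φ : Δ → ℝ be exponentially concave. Then the superdifferential map x ↦ ∂φ(x) takes nonempty values on Δ and is multiplicatively cyclically monotone: for every m ∈ ℕ, every cycle x_0, x_1, …, x_m ∈ Δ with x_m = x_0, and every choice y_i ∈ ∂φ(x_i), one has (i) ⟨y_i, x_{i+1} − x_i⟩ ≥ −1 for all i = 0,…,m−1, and (ii) ∏_{i=0}^{m−1} (1 + ⟨y_i, x_{i+1} − x_i⟩) ≥ 1. -/
open scoped BigOperators

/-- A function `φ` on the open simplex is exponentially concave if `e^φ` is concave there. -/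
def ExpConcave {d : ℕ} (φ : (Fin d → ℝ) → ℝ) : Prop :=
  ConcaveOn ℝ (openSimplex d) (fun x => Real.exp (φ x))

/-- The superdifferential of `φ` at `x` (relative to the open simplex):
`{y | φ(q) ≤ φ(x) + ⟨y, q - x⟩ for all q ∈ Δ}`. -/
def superdiff {d : ℕ} (φ : (Fin d → ℝ) → ℝ) (x : Fin d → ℝ) : Set (Fin d → ℝ) :=
  {y | ∀ q ∈ openSimplex d, φ q ≤ φ x + ∑ k, y k * (q k - x k)}

/-!
A supergradient `z` of `e^φ` at `x` yields the superdifferential element `y = e^{-φ(x)} z`, since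
`φ(q) - φ(x) ≤ log (1 + ⟨y, q - x⟩) ≤ ⟨y, q - x⟩`. As `Δ` has empty interior in `ℝ^d`, the
supergradient of `e^φ` is taken from its degree-one homogeneous extension
`q ↦ (∑ q) e^{φ(q / ∑ q)}`, which is concave on the open positive orthant, where Hahn–Banach
separates the open strict hypograph from a point of the graph.

Conversely, for `y ∈ ∂φ(x)`, concavity of `e^φ` on the segment from `x` to `q` together with
`φ ≤ φ(x) + ⟨y, · - x⟩` gives `e^{φ(q) - φ(x)} ≤ 1 + ⟨y, q - x⟩` in the limit of small steps.
Along a cycle the left-hand sides multiply to `1`.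
-/

open Set

section Supergradient

variable {E : Type*} [TopologicalSpace E] {s : Set E} {f : E → ℝ}

theorem ContinuousOn.isOpen_strict_hypograph (hf : ContinuousOn f s) (hs : IsOpen s) :
    IsOpen {p : E × ℝ | p.1 ∈ s ∧ p.2 < f p.1} := by
  have h := ((hf.comp continuous_fst.continuousOn (mapsTo_preimage _ _)).sub
    continuous_snd.continuousOn).isOpen_inter_preimage (hs.preimage continuous_fst)
    (isOpen_Ioi (a := 0))
  convert h using 1
  ext p; simp

variable [AddCommGroup E] [Module ℝ E] [IsTopologicalAddGroup E] [ContinuousSMul ℝ E]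

theorem ConcaveOn.exists_le_add_of_continuousOn (hf : ConcaveOn ℝ s f) (hfc : ContinuousOn f s)
    (hs : IsOpen s) {x : E} (hx : x ∈ s) :
    ∃ g : StrongDual ℝ E, ∀ q ∈ s, f q ≤ f x + g (q - x) := by
  obtain ⟨ℓ, hℓ⟩ := geometric_hahn_banach_open_point (x := (x, f x))
    hf.convex_strict_hypograph (hfc.isOpen_strict_hypograph hs) fun h => h.2.false
  set c := ℓ (0, 1)
  have hℓ_apply (q : E) (t : ℝ) : ℓ (q, t) = ℓ (q, 0) + t * c := by
    rw [← smul_eq_mul, ← map_smul, ← map_add]; simp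
  have hc : 0 < c := by
    have := hℓ (x, f x - 1) ⟨hx, by linarith⟩
    rw [hℓ_apply x (f x - 1), hℓ_apply x (f x)] at this
    linarith
  have hsupp (q : E) (hq : q ∈ s) : f q ≤ f x + (ℓ (x, 0) - ℓ (q, 0)) / c := by
    refine le_of_forall_lt_imp_le_of_dense fun t ht => ?_
    have := hℓ (q, t) ⟨hq, ht⟩
    rw [hℓ_apply q t, hℓ_apply x (f x)] at this
    rw [← sub_le_iff_le_add', le_div_iff₀ hc]
    linarith
  refine ⟨-(c⁻¹ • ℓ.comp (.inl ℝ E ℝ)), fun q hq => (hsupp q hq).trans_eq ?_⟩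
  have : ℓ (q - x, 0) = ℓ (q, 0) - ℓ (x, 0) := by rw [← map_sub, Prod.mk_sub_mk, sub_zero]
  simp only [div_eq_inv_mul, neg_apply, smul_apply, ContinuousLinearMap.comp_apply,
    ContinuousLinearMap.inl_apply, this, smul_eq_mul, add_right_inj]
  ring

end Supergradient

section Homogenization

variable {d : ℕ} [NeZero d]

lemma sum_pos_of_mem_pi_Ioi {q : Fin d → ℝ} (hq : q ∈ univ.pi fun _ => Ioi 0) :
    0 < ∑ i, q i :=
  Finset.sum_pos (fun i _ => hq i (mem_univ i)) Finset.univ_nonempty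

lemma inv_sum_smul_mem_openSimplex {q : Fin d → ℝ} (hq : q ∈ univ.pi fun _ => Ioi 0) :
    (∑ i, q i)⁻¹ • q ∈ openSimplex d := by
  have hs := sum_pos_of_mem_pi_Ioi hq
  refine ⟨fun i => mul_pos (inv_pos.2 hs) (hq i (mem_univ i)), ?_⟩
  simp only [Pi.smul_apply, smul_eq_mul, ← Finset.mul_sum, inv_mul_cancel₀ hs.ne']

theorem ConcaveOn.homogenization {g : (Fin d → ℝ) → ℝ} (hg : ConcaveOn ℝ (openSimplex d) g) :
    ConcaveOn ℝ (univ.pi fun _ => Ioi 0) fun q => (∑ i, q i) * g ((∑ i, q i)⁻¹ • q) := by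
  refine ⟨convex_pi fun _ _ => convex_Ioi 0, fun a ha b hb σ τ hσ hτ hστ => ?_⟩
  set sa := ∑ i, a i
  set sb := ∑ i, b i
  have hsa : 0 < sa := sum_pos_of_mem_pi_Ioi ha
  have hsb : 0 < sb := sum_pos_of_mem_pi_Ioi hb
  have hw : ∑ i, (σ • a + τ • b) i = σ * sa + τ * sb := by
    simp only [Pi.add_apply, Pi.smul_apply, smul_eq_mul, Finset.sum_add_distrib, ← Finset.mul_sum]
    rfl
  have hw_pos : 0 < σ * sa + τ * sb := by
    rcases hσ.eq_or_lt with rfl | hσ <;> nlinarith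
  set μ := σ * sa / (σ * sa + τ * sb)
  set ν := τ * sb / (σ * sa + τ * sb)
  have hμν : μ + ν = 1 := by rw [← add_div, div_self hw_pos.ne']
  have hcomb :
      (∑ i, (σ • a + τ • b) i)⁻¹ • (σ • a + τ • b) = μ • (sa⁻¹ • a) + ν • (sb⁻¹ • b) := by
    rw [hw]
    ext i
    simp only [Pi.add_apply, Pi.smul_apply, smul_eq_mul, μ, ν]
    field_simp
  have hconc := hg.2 (inv_sum_smul_mem_openSimplex ha) (inv_sum_smul_mem_openSimplex hb)
    (by positivity) (by positivity) hμν
  calc σ • (sa * g (sa⁻¹ • a)) + τ • (sb * g (sb⁻¹ • b))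
      = (σ * sa + τ * sb) * (μ • g (sa⁻¹ • a) + ν • g (sb⁻¹ • b)) := by
        simp only [smul_eq_mul, μ, ν]
        field_simp
    _ ≤ (σ * sa + τ * sb) * g (μ • (sa⁻¹ • a) + ν • (sb⁻¹ • b)) := by gcongr
    _ = (∑ i, (σ • a + τ • b) i) * g ((∑ i, (σ • a + τ • b) i)⁻¹ • (σ • a + τ • b)) := by
        rw [hcomb, hw]

end Homogenization

lemma ExpConcave.exists_exp_le_add_sum {d : ℕ} {φ : (Fin d → ℝ) → ℝ} (hφ : ExpConcave φ)
    {x : Fin d → ℝ} (hx : x ∈ openSimplex d) :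
    ∃ z : Fin d → ℝ, ∀ q ∈ openSimplex d,
      Real.exp (φ q) ≤ Real.exp (φ x) + ∑ k, z k * (q k - x k) := by
  have : NeZero d := ⟨by rintro rfl; simp [openSimplex] at hx⟩
  have hopen : IsOpen (univ.pi fun _ : Fin d => Ioi (0 : ℝ)) :=
    isOpen_set_pi finite_univ fun _ _ => isOpen_Ioi
  have hF := ConcaveOn.homogenization hφ
  have hx' : x ∈ univ.pi fun _ => Ioi 0 := fun i _ => hx.1 i
  obtain ⟨L, hL⟩ := hF.exists_le_add_of_continuousOn (hF.continuousOn hopen) hopen hx'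
  have hL_apply (v : Fin d → ℝ) : L v = ∑ k, L (Pi.single k 1) * v k := by
    conv_lhs => rw [pi_eq_sum_univ' v]
    simp [mul_comm]
  refine ⟨fun k => L (Pi.single k 1), fun q hq => ?_⟩
  have := hL q fun i _ => hq.1 i
  rwa [hq.2, hx.2, inv_one, one_smul, one_smul, one_mul, one_mul, hL_apply (q - x)] at this

lemma mem_superdiff_of_exp_le_add_sum {d : ℕ} {φ : (Fin d → ℝ) → ℝ} {x z : Fin d → ℝ}
    (hz : ∀ q ∈ openSimplex d, Real.exp (φ q) ≤ Real.exp (φ x) + ∑ k, z k * (q k - x k)) :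
    (Real.exp (φ x))⁻¹ • z ∈ superdiff φ x := by
  intro q hq
  set u := ∑ k, ((Real.exp (φ x))⁻¹ • z) k * (q k - x k)
  have hu : u = (Real.exp (φ x))⁻¹ * ∑ k, z k * (q k - x k) := by
    simp only [u, Finset.mul_sum, Pi.smul_apply, smul_eq_mul, mul_assoc]
  have : Real.exp (φ q) ≤ Real.exp (φ x + u) := by
    rw [Real.exp_add]
    calc Real.exp (φ q) ≤ Real.exp (φ x) * (1 + u) := by
          rw [hu, mul_add, mul_one, ← mul_assoc, mul_inv_cancel₀ (Real.exp_pos _).ne', one_mul]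
          exact hz q hq
      _ ≤ Real.exp (φ x) * Real.exp u := by
          gcongr; linarith [Real.add_one_le_exp u]
  exact Real.exp_le_exp.1 this

lemma le_of_forall_mul_le_exp_mul_sub_one {a s : ℝ}
    (h : ∀ t ∈ Ioo (0 : ℝ) 1, t * a ≤ Real.exp (t * s) - 1) : a ≤ s := by
  have hderiv : HasDerivAt (fun t : ℝ => Real.exp (t * s)) s 0 := by
    simpa using (hasDerivAt_mul_const s (x := 0)).exp
  have hslope : Filter.Tendsto (slope (fun t : ℝ => Real.exp (t * s)) 0) (nhdsWithin 0 (Ioi 0))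
      (nhds s) :=
    (hasDerivAt_iff_tendsto_slope.1 hderiv).mono_left (nhdsWithin_mono _ fun _ ht => ne_of_gt ht)
  refine ge_of_tendsto hslope ?_
  filter_upwards [Ioo_mem_nhdsGT (zero_lt_one' ℝ)] with t ht
  rw [slope_def_field, sub_zero, zero_mul, Real.exp_zero, le_div_iff₀ ht.1]
  linarith [h t ht]

theorem ExpConcave.exp_sub_le_one_add {d : ℕ} {φ : (Fin d → ℝ) → ℝ} (hφ : ExpConcave φ)
    {x q y : Fin d → ℝ} (hx : x ∈ openSimplex d) (hq : q ∈ openSimplex d)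
    (hy : y ∈ superdiff φ x) :
    Real.exp (φ q - φ x) ≤ 1 + ∑ k, y k * (q k - x k) := by
  set s := ∑ k, y k * (q k - x k)
  suffices Real.exp (φ q - φ x) - 1 ≤ s by linarith
  refine le_of_forall_mul_le_exp_mul_sub_one fun t ht => ?_
  have hxt : (1 - t) • x + t • q ∈ openSimplex d :=
    hφ.1 hx hq (by linarith [ht.2]) ht.1.le (by ring)
  have hsup : φ ((1 - t) • x + t • q) ≤ φ x + t * s := by
    convert hy _ hxt using 2
    simp only [s, Finset.mul_sum, Pi.add_apply, Pi.smul_apply, smul_eq_mul]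
    exact Finset.sum_congr rfl fun k _ => by ring
  have hconc : (1 - t) * Real.exp (φ x) + t * Real.exp (φ q) ≤
      Real.exp (φ ((1 - t) • x + t • q)) := by
    simpa only [smul_eq_mul] using hφ.2 hx hq (by linarith [ht.2]) ht.1.le (sub_add_cancel 1 t)
  have hexp : Real.exp (φ x) * (1 - t + t * Real.exp (φ q - φ x)) ≤
      Real.exp (φ x) * Real.exp (t * s) :=
    calc _ = (1 - t) * Real.exp (φ x) + t * Real.exp (φ q) := by
          rw [Real.exp_sub]; field_simp
      _ ≤ Real.exp (φ x + t * s) := hconc.trans (Real.exp_le_exp.2 hsup)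
      _ = _ := Real.exp_add _ _
  linarith [le_of_mul_le_mul_left hexp (Real.exp_pos _)]

theorem statement3_general {d : ℕ}
    (φ : (Fin d → ℝ) → ℝ) (hφ : ExpConcave φ) :
    (∀ x ∈ openSimplex d, (superdiff φ x).Nonempty) ∧
    (∀ (m : ℕ) (x y : ℕ → Fin d → ℝ),
      (∀ i, i ≤ m → x i ∈ openSimplex d) → x m = x 0 →
      (∀ i, i < m → y i ∈ superdiff φ (x i)) →
      (∀ i, i < m → -1 ≤ ∑ k, y i k * (x (i + 1) k - x i k)) ∧
      1 ≤ ∏ i ∈ Finset.range m, (1 + ∑ k, y i k * (x (i + 1) k - x i k))) := by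
  refine ⟨fun x hx => ?_, fun m x y hx hcycle hy => ?_⟩
  · obtain ⟨z, hz⟩ := hφ.exists_exp_le_add_sum hx
    exact ⟨_, mem_superdiff_of_exp_le_add_sum hz⟩
  have hstep (i : ℕ) (hi : i < m) :
      Real.exp (φ (x (i + 1)) - φ (x i)) ≤ 1 + ∑ k, y i k * (x (i + 1) k - x i k) :=
    hφ.exp_sub_le_one_add (hx i hi.le) (hx (i + 1) hi) (hy i hi)
  refine ⟨fun i hi => by linarith [hstep i hi, Real.exp_pos (φ (x (i + 1)) - φ (x i))], ?_⟩
  calc (1 : ℝ) = ∏ i ∈ Finset.range m, Real.exp (φ (x (i + 1)) - φ (x i)) := by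
        rw [← Real.exp_sum, Finset.sum_range_sub (fun i => φ (x i)), hcycle, sub_self,
          Real.exp_zero]
    _ ≤ _ := Finset.prod_le_prod (fun _ _ => (Real.exp_pos _).le)
        fun i hi => hstep i (Finset.mem_range.1 hi)

/-- the superdifferential of an exponentially concave function takes
nonempty values on the open simplex and is multiplicatively cyclically monotone. -/
theorem statement3 {d : ℕ} (hd : 2 ≤ d)
    (φ : (Fin d → ℝ) → ℝ) (hφ : ExpConcave φ) :
    (∀ x ∈ openSimplex d, (superdiff φ x).Nonempty) ∧
    (∀ (m : ℕ) (x y : ℕ → Fin d → ℝ),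
      (∀ i, i ≤ m → x i ∈ openSimplex d) → x m = x 0 →
      (∀ i, i < m → y i ∈ superdiff φ (x i)) →
      (∀ i, i < m → -1 ≤ ∑ k, y i k * (x (i + 1) k - x i k)) ∧
      1 ≤ ∏ i ∈ Finset.range m, (1 + ∑ k, y i k * (x (i + 1) k - x i k))) :=
  statement3_general φ hφ
end

section
/- Let T : Δ ⇉ ℝ^d be a multivalued map taking nonempty values, and let N ⊆ Δ be a set of (d−1)-dimensional Lebesgue measure zero such that T is multiplicatively cyclically monotone on Δ∖N, i.e., for every m ∈ ℕ, every cycle x_0, …, x_m ∈ Δ∖N with x_m = x_0, and every choice y_i ∈ T(x_i): ⟨y_i, x_{i+1} − x_i⟩ ≥ −1 for all i and ∏_{i=0}^{m−1}(1 + ⟨y_i, x_{i+1} − x_i⟩) ≥ 1. Then there exists an exponentially concave function φ : Δ → ℝ such that T(x) ⊆ ∂φ(x) for every x ∈ Δ∖N. -/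
open scoped BigOperators
open MeasureTheory

/-- The `(d-1)`-dimensional Lebesgue measure on the hyperplane `{∑ xᶦ = 1}`, realized as
the pushforward of Lebesgue measure on `ℝ^{d-1}` under
`(x¹,…,x^{d-1}) ↦ (x¹,…,x^{d-1}, 1 - ∑_{i<d-1} xᶦ)`. -/
noncomputable def simplexMeasure (d : ℕ) : Measure (Fin d → ℝ) :=
  Measure.map
    (fun y : Fin (d - 1) → ℝ => fun i : Fin d =>
      if h : (i : ℕ) < d - 1 then y ⟨(i : ℕ), h⟩ else 1 - ∑ j, y j)
    volume

/-!
The argument is a multiplicative version of Rockafellar's construction. Fix `x₀ ∈ Δ \ N` and let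
`Φ q` be the infimum, over chains `x₀, …, xₘ` in `Δ \ N` with `yᵢ ∈ T xᵢ`, of
`∏ᵢ (1 + ⟨yᵢ, xᵢ₊₁ - xᵢ⟩) · (1 + ⟨yₘ, q - xₘ⟩)`. Each of these functions is affine, so `Φ` is
concave. Closing a chain through `z` back to `x₀` gives a cycle, so cyclic monotonicity makes
each of them nonnegative on `Δ \ N`, hence on `Δ` because a null set has dense complement, and at
least `1` at `x₀`; concavity then forces `Φ > 0` on `Δ`. Appending `(x, y)` to a chain gives
`Φ q ≤ Φ x · (1 + ⟨y, q - x⟩)`, and `log (1 + t) ≤ t` turns this into `y ∈ ∂(log Φ)(x)`.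
-/

open Finset Topology

lemma concaveOn_ciInf {E κ : Type*} [AddCommMonoid E] [Module ℝ E] [Nonempty κ] {s : Set E}
    {f : κ → E → ℝ} (hf : ∀ i, ConcaveOn ℝ s (f i))
    (hbdd : ∀ x ∈ s, BddBelow (Set.range fun i => f i x)) :
    ConcaveOn ℝ s fun x => ⨅ i, f i x := by
  refine ⟨(hf (Classical.arbitrary κ)).1, fun x hx y hy a b ha hb hab => le_ciInf fun i => ?_⟩
  dsimp only
  calc a • (⨅ i, f i x) + b • (⨅ i, f i y) ≤ a • f i x + b • f i y := by
        gcongr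
        exacts [ciInf_le (hbdd x hx) i, ciInf_le (hbdd y hy) i]
    _ ≤ f i (a • x + b • y) := (hf i).2 hx hy ha hb hab

lemma ConcaveOn.pos_of_mem_openSegment {E : Type*} [AddCommMonoid E] [Module ℝ E] {s : Set E}
    {f : E → ℝ} (hf : ConcaveOn ℝ s f) {w x q : E} (hw : w ∈ s) (hx : x ∈ s) (hfw : 0 ≤ f w)
    (hfx : 0 < f x) (hq : q ∈ openSegment ℝ w x) : 0 < f q := by
  obtain ⟨a, b, ha, hb, hab, rfl⟩ := hq
  calc 0 < a • f w + b • f x := by simp only [smul_eq_mul]; positivity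
    _ ≤ f (a • w + b • x) := hf.2 hw hx ha.le hb.le hab

section Chains

variable {ι : Type*}

def IsChainIn (S : Set (ι → ℝ)) (T : (ι → ℝ) → Set (ι → ℝ)) (x y : ℕ → ι → ℝ) (m : ℕ) :
    Prop :=
  (∀ i ≤ m, x i ∈ S) ∧ ∀ i ≤ m, y i ∈ T (x i)

lemma IsChainIn.snoc {S : Set (ι → ℝ)} {T : (ι → ℝ) → Set (ι → ℝ)} {x y : ℕ → ι → ℝ} {m : ℕ}
    (h : IsChainIn S T x y m) {z w : ι → ℝ} (hz : z ∈ S) (hw : w ∈ T z) :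
    IsChainIn S T (Function.update x (m + 1) z) (Function.update y (m + 1) w) (m + 1) := by
  constructor <;> intro i hi <;> rcases Nat.le_succ_iff.mp hi with hi | rfl
  · rw [Function.update_of_ne (by omega)]; exact h.1 i hi
  · simpa using hz
  · rw [Function.update_of_ne (by omega), Function.update_of_ne (by omega)]; exact h.2 i hi
  · simpa using hw

variable [Fintype ι]

def chainProd (x y : ℕ → ι → ℝ) (m : ℕ) : ℝ :=
  ∏ i ∈ range m, (1 + y i ⬝ᵥ (x (i + 1) - x i))

def chainFun (x y : ℕ → ι → ℝ) (m : ℕ) (q : ι → ℝ) : ℝ :=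
  chainProd x y m * (1 + y m ⬝ᵥ (q - x m))

lemma chainProd_succ (x y : ℕ → ι → ℝ) (m : ℕ) :
    chainProd x y (m + 1) = chainFun x y m (x (m + 1)) :=
  prod_range_succ _ _

lemma chainProd_nonneg {x y : ℕ → ι → ℝ} {m : ℕ}
    (h : ∀ i < m, 0 ≤ 1 + y i ⬝ᵥ (x (i + 1) - x i)) : 0 ≤ chainProd x y m :=
  prod_nonneg fun i hi => h i (mem_range.mp hi)

lemma chainProd_congr {x x' y y' : ℕ → ι → ℝ} {m : ℕ} (hx : ∀ i ≤ m, x' i = x i)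
    (hy : ∀ i < m, y' i = y i) : chainProd x' y' m = chainProd x y m :=
  prod_congr rfl fun i hi => by
    have hi := mem_range.mp hi
    rw [hx i hi.le, hx (i + 1) hi, hy i hi]

lemma chainFun_congr {x x' y y' : ℕ → ι → ℝ} {m : ℕ} (hx : ∀ i ≤ m, x' i = x i)
    (hy : ∀ i ≤ m, y' i = y i) : chainFun x' y' m = chainFun x y m := by
  ext q
  rw [chainFun, chainFun, chainProd_congr hx fun i hi => hy i hi.le, hx m le_rfl, hy m le_rfl]

lemma continuous_chainFun (x y : ℕ → ι → ℝ) (m : ℕ) : Continuous (chainFun x y m) := by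
  unfold chainFun dotProduct
  fun_prop

lemma concaveOn_chainFun (x y : ℕ → ι → ℝ) (m : ℕ) {s : Set (ι → ℝ)} (hs : Convex ℝ s) :
    ConcaveOn ℝ s (chainFun x y m) := by
  refine ⟨hs, fun p _ r _ a b _ _ hab => le_of_eq ?_⟩
  obtain rfl : b = 1 - a := by linarith
  simp only [chainFun, smul_eq_mul, dotProduct_sub, dotProduct_add, dotProduct_smul]
  ring

def MulCyclicallyMonotoneOn (S : Set (ι → ℝ)) (T : (ι → ℝ) → Set (ι → ℝ)) : Prop :=
  ∀ (m : ℕ) (x y : ℕ → ι → ℝ), (∀ i ≤ m, x i ∈ S) → x m = x 0 → (∀ i < m, y i ∈ T (x i)) →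
    (∀ i < m, -1 ≤ y i ⬝ᵥ (x (i + 1) - x i)) ∧ 1 ≤ chainProd x y m

variable {S : Set (ι → ℝ)} {T : (ι → ℝ) → Set (ι → ℝ)}

lemma MulCyclicallyMonotoneOn.chainFun_close (hT : MulCyclicallyMonotoneOn S T)
    {x y : ℕ → ι → ℝ} {m : ℕ} (hc : IsChainIn S T x y m) {z w : ι → ℝ} (hz : z ∈ S)
    (hw : w ∈ T z) :
    0 ≤ chainFun x y m z ∧ 0 < 1 + w ⬝ᵥ (x 0 - z) ∧
      1 ≤ chainFun x y m z * (1 + w ⬝ᵥ (x 0 - z)) := by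
  set X := Function.update (Function.update x (m + 1) z) (m + 2) (x 0)
  set Y := Function.update (Function.update y (m + 1) w) (m + 2) (y 0)
  have hcyc : IsChainIn S T X Y (m + 2) :=
    (hc.snoc hz hw).snoc (hc.1 0 m.zero_le) (hc.2 0 m.zero_le)
  have hXz : X (m + 1) = z := by simp [X]
  have hX0 : X (m + 2) = X 0 := by simp [X]
  obtain ⟨hfac, hprod⟩ := hT (m + 2) X Y hcyc.1 hX0 fun i hi => hcyc.2 i hi.le
  have hfun : chainFun X Y m = chainFun x y m := by
    refine chainFun_congr (fun i hi => ?_) (fun i hi => ?_) <;>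
      exact (Function.update_of_ne (by omega) _ _).trans (Function.update_of_ne (by omega) _ _)
  have hsplit : chainProd X Y (m + 2) = chainFun x y m z * (1 + w ⬝ᵥ (x 0 - z)) := by
    rw [chainProd_succ, chainFun, chainProd_succ, hfun, hXz]
    simp [X, Y]
  have hz_nonneg : 0 ≤ chainFun x y m z := by
    rw [← hfun, ← hXz, ← chainProd_succ]
    exact chainProd_nonneg fun i hi => by linarith [hfac i (by omega)]
  refine ⟨hz_nonneg, pos_of_mul_pos_right (by linarith) hz_nonneg, hsplit ▸ hprod⟩

def chainFuns (S : Set (ι → ℝ)) (T : (ι → ℝ) → Set (ι → ℝ)) (x₀ : ι → ℝ) :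
    Set ((ι → ℝ) → ℝ) :=
  {F | ∃ m x y, x 0 = x₀ ∧ IsChainIn S T x y m ∧ F = chainFun x y m}

noncomputable def chainPotential (S : Set (ι → ℝ)) (T : (ι → ℝ) → Set (ι → ℝ)) (x₀ q : ι → ℝ) :
    ℝ :=
  ⨅ F : chainFuns S T x₀, (F : (ι → ℝ) → ℝ) q

variable {x₀ : ι → ℝ}

lemma mul_mem_chainFuns {F : (ι → ℝ) → ℝ} (hF : F ∈ chainFuns S T x₀) {z w : ι → ℝ}
    (hz : z ∈ S) (hw : w ∈ T z) : (fun q => F z * (1 + w ⬝ᵥ (q - z))) ∈ chainFuns S T x₀ := by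
  obtain ⟨m, x, y, h0, hc, rfl⟩ := hF
  refine ⟨m + 1, _, _, ?_, hc.snoc hz hw, ?_⟩
  · rwa [Function.update_of_ne (by omega)]
  · ext q
    have hfun : chainFun (Function.update x (m + 1) z) (Function.update y (m + 1) w) m =
        chainFun x y m :=
      chainFun_congr (fun i hi => Function.update_of_ne (by omega) _ _)
        (fun i hi => Function.update_of_ne (by omega) _ _)
    rw [eq_comm, chainFun, chainProd_succ, hfun]
    simp

lemma MulCyclicallyMonotoneOn.nonneg_of_mem_chainFuns (hT : MulCyclicallyMonotoneOn S T)
    (hTne : ∀ z ∈ S, (T z).Nonempty) {F : (ι → ℝ) → ℝ} (hF : F ∈ chainFuns S T x₀)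
    {q : ι → ℝ} (hq : q ∈ closure S) : 0 ≤ F q := by
  obtain ⟨m, x, y, -, hc, rfl⟩ := hF
  refine closure_minimal (fun z hz => ?_) (isClosed_le continuous_const (continuous_chainFun ..)) hq
  obtain ⟨w, hw⟩ := hTne z hz
  exact (hT.chainFun_close hc hz hw).1

lemma MulCyclicallyMonotoneOn.one_le_of_mem_chainFuns (hT : MulCyclicallyMonotoneOn S T)
    (hx₀ : x₀ ∈ S) {y₀ : ι → ℝ} (hy₀ : y₀ ∈ T x₀) {F : (ι → ℝ) → ℝ}
    (hF : F ∈ chainFuns S T x₀) : 1 ≤ F x₀ := by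
  obtain ⟨m, x, y, h0, hc, rfl⟩ := hF
  simpa [h0] using (hT.chainFun_close hc hx₀ hy₀).2.2

lemma concaveOn_of_mem_chainFuns {F : (ι → ℝ) → ℝ} (hF : F ∈ chainFuns S T x₀)
    {U : Set (ι → ℝ)} (hU : Convex ℝ U) : ConcaveOn ℝ U F := by
  obtain ⟨m, x, y, -, -, rfl⟩ := hF
  exact concaveOn_chainFun x y m hU

lemma chainFuns_nonempty (hTne : ∀ z ∈ S, (T z).Nonempty) (hx₀ : x₀ ∈ S) :
    (chainFuns S T x₀).Nonempty :=
  let ⟨_, hy₀⟩ := hTne x₀ hx₀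
  ⟨_, 0, _, _, rfl, ⟨fun _ _ => hx₀, fun _ _ => hy₀⟩, rfl⟩

lemma MulCyclicallyMonotoneOn.bddBelow_chainFuns_apply (hT : MulCyclicallyMonotoneOn S T)
    (hTne : ∀ z ∈ S, (T z).Nonempty) {q : ι → ℝ} (hq : q ∈ closure S) :
    BddBelow (Set.range fun F : chainFuns S T x₀ => (F : (ι → ℝ) → ℝ) q) :=
  ⟨0, Set.forall_mem_range.2 fun F => hT.nonneg_of_mem_chainFuns hTne F.2 hq⟩

lemma MulCyclicallyMonotoneOn.chainPotential_le (hT : MulCyclicallyMonotoneOn S T)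
    (hTne : ∀ z ∈ S, (T z).Nonempty) {F : (ι → ℝ) → ℝ} (hF : F ∈ chainFuns S T x₀)
    {q : ι → ℝ} (hq : q ∈ closure S) : chainPotential S T x₀ q ≤ F q :=
  ciInf_le (hT.bddBelow_chainFuns_apply hTne hq) ⟨F, hF⟩

lemma MulCyclicallyMonotoneOn.chainPotential_nonneg (hT : MulCyclicallyMonotoneOn S T)
    (hTne : ∀ z ∈ S, (T z).Nonempty) (hx₀ : x₀ ∈ S) {q : ι → ℝ} (hq : q ∈ closure S) :
    0 ≤ chainPotential S T x₀ q :=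
  have := (chainFuns_nonempty hTne hx₀).to_subtype
  le_ciInf fun F => hT.nonneg_of_mem_chainFuns hTne F.2 hq

lemma MulCyclicallyMonotoneOn.one_le_chainPotential (hT : MulCyclicallyMonotoneOn S T)
    (hTne : ∀ z ∈ S, (T z).Nonempty) (hx₀ : x₀ ∈ S) : 1 ≤ chainPotential S T x₀ x₀ := by
  have := (chainFuns_nonempty hTne hx₀).to_subtype
  obtain ⟨y₀, hy₀⟩ := hTne x₀ hx₀
  exact le_ciInf fun F => hT.one_le_of_mem_chainFuns hx₀ hy₀ F.2

lemma MulCyclicallyMonotoneOn.concaveOn_chainPotential (hT : MulCyclicallyMonotoneOn S T)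
    (hTne : ∀ z ∈ S, (T z).Nonempty) (hx₀ : x₀ ∈ S) {U : Set (ι → ℝ)} (hU : Convex ℝ U)
    (hUS : U ⊆ closure S) : ConcaveOn ℝ U (chainPotential S T x₀) :=
  have := (chainFuns_nonempty hTne hx₀).to_subtype
  concaveOn_ciInf (fun F => concaveOn_of_mem_chainFuns F.2 hU)
    fun _ hq => hT.bddBelow_chainFuns_apply hTne (hUS hq)

lemma MulCyclicallyMonotoneOn.chainPotential_le_mul (hT : MulCyclicallyMonotoneOn S T)
    (hTne : ∀ z ∈ S, (T z).Nonempty) (hx₀ : x₀ ∈ S) {x y q : ι → ℝ} (hx : x ∈ S) (hy : y ∈ T x)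
    (hq : q ∈ closure S) (hpos : 0 < chainPotential S T x₀ q) :
    0 < 1 + y ⬝ᵥ (q - x) ∧
      chainPotential S T x₀ q ≤ chainPotential S T x₀ x * (1 + y ⬝ᵥ (q - x)) := by
  have hle : ∀ F ∈ chainFuns S T x₀, chainPotential S T x₀ q ≤ F x * (1 + y ⬝ᵥ (q - x)) :=
    fun F hF => hT.chainPotential_le hTne (mul_mem_chainFuns hF hx hy) hq
  obtain ⟨F₀, hF₀⟩ := chainFuns_nonempty hTne hx₀
  have hc : 0 < 1 + y ⬝ᵥ (q - x) := by
    by_contra! hc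
    have := mul_nonpos_of_nonneg_of_nonpos
      (hT.nonneg_of_mem_chainFuns hTne hF₀ (subset_closure hx)) hc
    linarith [hle F₀ hF₀]
  have := (chainFuns_nonempty hTne hx₀).to_subtype
  refine ⟨hc, ?_⟩
  exact (le_ciInf fun F : chainFuns S T x₀ => hle F F.2).trans_eq
    (Real.iInf_mul_of_nonneg hc.le _).symm

end Chains

section Simplex

variable {d : ℕ}

lemma convex_openSimplex : Convex ℝ (openSimplex d) := by
  intro p hp r hr a b ha hb hab
  refine ⟨fun i => ?_, ?_⟩
  · have := hp.1 i; have := hr.1 i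
    simp only [Pi.add_apply, Pi.smul_apply, smul_eq_mul]
    rcases ha.eq_or_lt with rfl | ha
    · simp_all
    · positivity
  · simp only [Pi.add_apply, Pi.smul_apply, smul_eq_mul, sum_add_distrib, ← mul_sum, hp.2, hr.2]
    linarith

lemma ne_zero_of_mem_openSimplex {x : Fin d → ℝ} (hx : x ∈ openSimplex d) : d ≠ 0 := by
  rintro rfl
  simpa using hx.2

lemma openSimplex_nonempty (hd : d ≠ 0) : (openSimplex d).Nonempty :=
  ⟨fun _ => (d : ℝ)⁻¹, fun _ => by positivity, by simp [hd]⟩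

lemma exists_mem_openSimplex_mem_openSegment {q x : Fin d → ℝ} (hq : q ∈ openSimplex d)
    (hx : x ∈ openSimplex d) : ∃ w ∈ openSimplex d, q ∈ openSegment ℝ w x := by
  have hnear : ∀ᶠ t in 𝓝 (0 : ℝ), ∀ i, 0 < q i + t * (q i - x i) :=
    Filter.eventually_all.2 fun i =>
      continuousAt_const.eventually_lt
        (by fun_prop : Continuous fun t : ℝ => q i + t * (q i - x i)).continuousAt
        (by simpa using hq.1 i)
  obtain ⟨t, hcoord, ht⟩ := ((hnear.filter_mono nhdsWithin_le_nhds).and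
    (self_mem_nhdsWithin : Set.Ioi (0 : ℝ) ∈ 𝓝[>] 0)).exists
  refine ⟨q + t • (q - x), ⟨fun i => by simpa using hcoord i, ?_⟩, ?_⟩
  · simp [sum_add_distrib, ← mul_sum, hq.2, hx.2]
  · refine ⟨1 / (1 + t), t / (1 + t), by positivity, by positivity, by field_simp, ?_⟩
    ext i
    simp only [Pi.add_apply, Pi.smul_apply, Pi.sub_apply, smul_eq_mul]
    field_simp
    ring

def simplexChart (n : ℕ) (y : Fin n → ℝ) : Fin (n + 1) → ℝ :=
  fun i => if h : (i : ℕ) < n then y ⟨i, h⟩ else 1 - ∑ j, y j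

lemma simplexMeasure_succ (n : ℕ) : simplexMeasure (n + 1) = (volume).map (simplexChart n) := rfl

lemma continuous_simplexChart (n : ℕ) : Continuous (simplexChart n) :=
  continuous_pi fun i => by
    by_cases h : (i : ℕ) < n <;> simp only [simplexChart, h, dif_pos, dif_neg, not_false_iff] <;>
      fun_prop

lemma simplexChart_castSucc (n : ℕ) (y : Fin n → ℝ) (j : Fin n) :
    simplexChart n y j.castSucc = y j := by
  simp [simplexChart]

lemma simplexChart_last (n : ℕ) (y : Fin n → ℝ) : simplexChart n y (Fin.last n) = 1 - ∑ j, y j := by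
  simp [simplexChart]

lemma sum_simplexChart (n : ℕ) (y : Fin n → ℝ) : ∑ i, simplexChart n y i = 1 := by
  simp [Fin.sum_univ_castSucc, simplexChart_castSucc, simplexChart_last]

lemma simplexChart_eq {n : ℕ} {x : Fin (n + 1) → ℝ} (hx : ∑ i, x i = 1) :
    simplexChart n (fun j => x j.castSucc) = x := by
  funext i
  induction i using Fin.lastCases with
  | last => rw [simplexChart_last, ← hx, Fin.sum_univ_castSucc]; ring
  | cast j => exact simplexChart_castSucc n _ j

lemma isOpen_preimage_simplexChart_openSimplex (n : ℕ) :
    IsOpen (simplexChart n ⁻¹' openSimplex (n + 1)) := by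
  have : simplexChart n ⁻¹' openSimplex (n + 1) = ⋂ i, (simplexChart n · i) ⁻¹' Set.Ioi 0 := by
    ext y; simp [openSimplex, sum_simplexChart]
  rw [this]
  exact isOpen_iInter_of_finite fun i =>
    isOpen_Ioi.preimage ((continuous_apply i).comp (continuous_simplexChart n))

lemma simplexMeasure_inter_openSimplex_pos {U : Set (Fin d → ℝ)} (hU : IsOpen U)
    (hne : (U ∩ openSimplex d).Nonempty) : 0 < simplexMeasure d (U ∩ openSimplex d) := by
  obtain ⟨x, hxU, hx⟩ := hne
  obtain ⟨n, rfl⟩ : ∃ n, d = n + 1 :=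
    ⟨d - 1, (Nat.succ_pred_eq_of_ne_zero (ne_zero_of_mem_openSimplex hx)).symm⟩
  have hopen : IsOpen (simplexChart n ⁻¹' (U ∩ openSimplex (n + 1))) :=
    (hU.preimage (continuous_simplexChart n)).inter (isOpen_preimage_simplexChart_openSimplex n)
  calc 0 < volume (simplexChart n ⁻¹' (U ∩ openSimplex (n + 1))) :=
        hopen.measure_pos volume
          ⟨_, by rw [Set.mem_preimage, simplexChart_eq hx.2]; exact ⟨hxU, hx⟩⟩
    _ ≤ simplexMeasure (n + 1) (U ∩ openSimplex (n + 1)) := by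
        rw [simplexMeasure_succ]
        exact Measure.le_map_apply (continuous_simplexChart n).aemeasurable _

lemma openSimplex_subset_closure_diff {N : Set (Fin d → ℝ)} (hN : simplexMeasure d N = 0) :
    openSimplex d ⊆ closure (openSimplex d \ N) := by
  intro x hx
  rw [mem_closure_iff]
  intro U hU hxU
  by_contra hempty
  have hsub : U ∩ openSimplex d ⊆ N := fun z hz => by
    by_contra hzN
    exact hempty ⟨z, hz.1, hz.2, hzN⟩
  exact (simplexMeasure_inter_openSimplex_pos hU ⟨x, hxU, hx⟩).ne' (measure_mono_null hsub hN)

end Simplex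

theorem statement4_general {d : ℕ} (hd : 2 ≤ d)
    (T : (Fin d → ℝ) → Set (Fin d → ℝ))
    (hT : ∀ x ∈ openSimplex d, (T x).Nonempty)
    (N : Set (Fin d → ℝ)) (hNnull : simplexMeasure d N = 0)
    (hMCM : ∀ (m : ℕ) (x y : ℕ → Fin d → ℝ),
      (∀ i, i ≤ m → x i ∈ openSimplex d \ N) → x m = x 0 →
      (∀ i, i < m → y i ∈ T (x i)) →
      (∀ i, i < m → -1 ≤ ∑ k, y i k * (x (i + 1) k - x i k)) ∧
      1 ≤ ∏ i ∈ Finset.range m, (1 + ∑ k, y i k * (x (i + 1) k - x i k))) :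
    ∃ φ : (Fin d → ℝ) → ℝ, ExpConcave φ ∧
      ∀ x ∈ openSimplex d \ N, T x ⊆ superdiff φ x := by
  set S := openSimplex d \ N
  have hS : MulCyclicallyMonotoneOn S T := hMCM
  have hTne : ∀ z ∈ S, (T z).Nonempty := fun z hz => hT z hz.1
  have hdense : openSimplex d ⊆ closure S := openSimplex_subset_closure_diff hNnull
  obtain ⟨x₀, hx₀⟩ : S.Nonempty :=
    closure_nonempty_iff.mp ((openSimplex_nonempty (by omega)).mono hdense)
  set Φ := chainPotential S T x₀
  have hconc : ConcaveOn ℝ (openSimplex d) Φ :=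
    hS.concaveOn_chainPotential hTne hx₀ convex_openSimplex hdense
  have hpos : ∀ q ∈ openSimplex d, 0 < Φ q := fun q hq => by
    obtain ⟨w, hw, hqw⟩ := exists_mem_openSimplex_mem_openSegment hq hx₀.1
    exact hconc.pos_of_mem_openSegment hw hx₀.1 (hS.chainPotential_nonneg hTne hx₀ (hdense hw))
      (one_pos.trans_le (hS.one_le_chainPotential hTne hx₀)) hqw
  refine ⟨fun q => Real.log (Φ q), hconc.congr fun q hq => (Real.exp_log (hpos q hq)).symm, ?_⟩
  intro x hx y hy q hq
  obtain ⟨hc, hle⟩ := hS.chainPotential_le_mul hTne hx₀ hx hy (hdense hq) (hpos q hq)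
  calc Real.log (Φ q) ≤ Real.log (Φ x * (1 + y ⬝ᵥ (q - x))) := Real.log_le_log (hpos q hq) hle
    _ = Real.log (Φ x) + Real.log (1 + y ⬝ᵥ (q - x)) := Real.log_mul (hpos x hx.1).ne' hc.ne'
    _ ≤ Real.log (Φ x) + y ⬝ᵥ (q - x) := by linarith [Real.log_le_sub_one_of_pos hc]

/-- a multivalued map with nonempty values that is multiplicatively
cyclically monotone outside a Lebesgue-null subset `N` of the simplex is contained in the
superdifferential of some exponentially concave function, off `N`. -/
theorem statement4 {d : ℕ} (hd : 2 ≤ d)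
    (T : (Fin d → ℝ) → Set (Fin d → ℝ))
    (hT : ∀ x ∈ openSimplex d, (T x).Nonempty)
    (N : Set (Fin d → ℝ)) (hNsub : N ⊆ openSimplex d) (hNnull : simplexMeasure d N = 0)
    (hMCM : ∀ (m : ℕ) (x y : ℕ → Fin d → ℝ),
      (∀ i, i ≤ m → x i ∈ openSimplex d \ N) → x m = x 0 →
      (∀ i, i < m → y i ∈ T (x i)) →
      (∀ i, i < m → -1 ≤ ∑ k, y i k * (x (i + 1) k - x i k)) ∧
      1 ≤ ∏ i ∈ Finset.range m, (1 + ∑ k, y i k * (x (i + 1) k - x i k))) :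
    ∃ φ : (Fin d → ℝ) → ℝ, ExpConcave φ ∧
      ∀ x ∈ openSimplex d \ N, T x ⊆ superdiff φ x :=
  statement4_general hd T hT N hNnull hMCM
end

section
/- Let G : Δ → (0,∞) be a concave function. Then there exists a sequence of functions G_n : Δ → (0,∞), each concave on Δ and each the restriction to Δ of a C^∞ function, such that G_n(x) → G(x) for every x ∈ Δ; moreover, at every point x ∈ Δ where G is differentiable, (∂_j − ∂_i)G_n(x) → (∂_j − ∂_i)G(x) for all indices i, j. -/
open scoped BigOperators
open Filter

namespace S6

open MeasureTheory Metric Set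
open scoped Convolution Topology

variable {d : ℕ} {ε : ℝ}

noncomputable def proj (d : ℕ) (z : Fin d → ℝ) : Fin d → ℝ :=
  fun i => z i + (1 - ∑ k, z k) / d

noncomputable def shrink (d : ℕ) (ε : ℝ) (x : Fin d → ℝ) : Fin d → ℝ :=
  fun i => (1 - ε) * x i + ε / d

def Aset (d : ℕ) (ε : ℝ) : Set (Fin d → ℝ) := {z | ∀ i, ε / (2 * d) ≤ proj d z i}

noncomputable def chi (d : ℕ) (ε : ℝ) (z : Fin d → ℝ) : ℝ :=
  max 0 (1 - Metric.infDist z (Aset d ε) / (ε / (16 * d + 16)))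

noncomputable def Hhat (d : ℕ) (G : (Fin d → ℝ) → ℝ) (ε : ℝ) (z : Fin d → ℝ) : ℝ :=
  chi d ε z * G (proj d z)

def Upos (d : ℕ) : Set (Fin d → ℝ) := {z | ∀ i, 0 < proj d z i}

lemma sum_proj (hd : 0 < d) (z : Fin d → ℝ) : ∑ i, proj d z i = 1 := by
  have hd' : (d : ℝ) ≠ 0 := Nat.cast_ne_zero.2 hd.ne'
  simp only [proj]
  rw [Finset.sum_add_distrib, Finset.sum_const, Finset.card_univ, Fintype.card_fin]
  field_simp
  rw [nsmul_eq_mul, mul_div_assoc', mul_div_cancel_left₀ _ hd']; ring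

lemma proj_eq_self {z : Fin d → ℝ} (hz : ∑ i, z i = 1) : proj d z = z := by
  funext i; simp [proj, hz]

lemma mem_Upos_of_mem_simplex {x : Fin d → ℝ} (hx : x ∈ openSimplex d) : x ∈ Upos d := by
  intro i; rw [proj_eq_self hx.2]; exact hx.1 i

lemma continuous_proj_apply (i : Fin d) : Continuous fun z : Fin d → ℝ => proj d z i := by
  simp only [proj]
  exact (continuous_apply i).add
    ((continuous_const.sub (continuous_finset_sum _ fun k _ => continuous_apply k)).div_const _)

lemma continuous_proj : Continuous (proj d) :=
  continuous_pi fun i => continuous_proj_apply i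

lemma isOpen_Upos : IsOpen (Upos d) := by
  rw [show Upos d = ⋂ i, {z : Fin d → ℝ | 0 < proj d z i} from by ext z; simp [Upos]]
  exact isOpen_iInter_of_finite fun i =>
    isOpen_lt continuous_const (continuous_proj_apply i)

lemma mem_simplex_of_mem_Upos (hd : 0 < d) {z : Fin d → ℝ} (hz : z ∈ Upos d) :
    proj d z ∈ openSimplex d := ⟨hz, sum_proj hd z⟩

lemma proj_combo (hd : 0 < d) {a b : ℝ} (hab : a + b = 1) (z w : Fin d → ℝ) :
    proj d (a • z + b • w) = a • proj d z + b • proj d w := by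
  have hd' : (d : ℝ) ≠ 0 := Nat.cast_ne_zero.2 hd.ne'
  have hb : b = 1 - a := by linarith
  subst hb
  funext i
  have hsum : ∑ k, (a • z + (1 - a) • w) k = a * ∑ k, z k + (1 - a) * ∑ k, w k := by
    simp [Finset.sum_add_distrib, Finset.mul_sum, Finset.sum_mul, mul_comm]
  show (a • z + (1 - a) • w) i + (1 - ∑ k, (a • z + (1 - a) • w) k) / d
      = a * (z i + (1 - ∑ k, z k) / d) + (1 - a) * (w i + (1 - ∑ k, w k) / d)
  rw [hsum]
  simp only [Pi.add_apply, Pi.smul_apply, smul_eq_mul]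
  field_simp
  ring

lemma convex_Aset (hd : 0 < d) : Convex ℝ (Aset d ε) := by
  intro z hz w hw a b ha hb hab
  intro i
  have := proj_combo hd hab z w
  have hi : proj d (a • z + b • w) i = a * proj d z i + b * proj d w i := by
    rw [this]; simp [smul_eq_mul]
  rw [hi]
  calc ε / (2 * d) = a * (ε / (2 * d)) + b * (ε / (2 * d)) := by rw [← add_mul, hab, one_mul]
  _ ≤ a * proj d z i + b * proj d w i := by
      gcongr
      · exact hz i
      · exact hw i

lemma concaveOn_Upos (hd : 0 < d) {G : (Fin d → ℝ) → ℝ}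
    (hGconc : ConcaveOn ℝ (openSimplex d) G) :
    ConcaveOn ℝ (Upos d) (fun z => G (proj d z)) := by
  constructor
  · intro z hz w hw a b ha hb hab i
    have hi : proj d (a • z + b • w) i = a * proj d z i + b * proj d w i := by
      rw [proj_combo hd hab]; simp [smul_eq_mul]
    rw [hi]
    rcases ha.eq_or_lt with h | h
    · simp only [← h, zero_mul, zero_add]
      have hb1 : b = 1 := by linarith
      simpa [hb1] using hw i
    · have := hw i
      nlinarith [hz i, hw i]
  · intro z hz w hw a b ha hb hab
    dsimp only
    rw [proj_combo hd hab]
    exact hGconc.2 (mem_simplex_of_mem_Upos hd hz) (mem_simplex_of_mem_Upos hd hw) ha hb hab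

/-- For a concave function differentiable at `x`, the directional derivative dominates
the chord slope. -/
lemma slope_le_fderiv {F : Type*} [NormedAddCommGroup F] [NormedSpace ℝ F]
    {s : Set F} {f : F → ℝ} {f' : F →L[ℝ] ℝ} {x v : F} {t₀ : ℝ}
    (hconc : ConcaveOn ℝ s f) (hx : x ∈ s) (hx' : x + t₀ • v ∈ s) (ht₀ : 0 < t₀)
    (hf : HasFDerivAt f f' x) :
    (f (x + t₀ • v) - f x) / t₀ ≤ f' v := by
  set l : ℝ →L[ℝ] F := (1 : ℝ →L[ℝ] ℝ).smulRight v with hl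
  have hline : HasFDerivAt (fun u : ℝ => x + u • v) l 0 := by
    have h1 : HasFDerivAt (fun u : ℝ => l u) l 0 := l.hasFDerivAt
    have h2 := h1.const_add x
    exact h2
  have hcomp : HasFDerivAt (fun u : ℝ => f (x + u • v)) (f'.comp l) 0 := by
    have h0 : x + (0:ℝ) • v = x := by simp
    have hf' : HasFDerivAt f f' (x + (0:ℝ) • v) := by rwa [h0]
    exact HasFDerivAt.comp (0:ℝ) hf' hline
  have hg : HasDerivAt (fun u : ℝ => f (x + u • v)) (f' v) 0 := by
    rw [hasDerivAt_iff_hasFDerivAt]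
    convert hcomp using 1
    ext u
    simp [hl, mul_comm]
    ext u
    simp [hl, mul_comm]
  have hslope := hasDerivAt_iff_tendsto_slope.1 hg
  have hmono : Tendsto (slope (fun u : ℝ => f (x + u • v)) 0) (nhdsWithin 0 (Set.Ioi 0))
      (nhds (f' v)) :=
    hslope.mono_left (nhdsWithin_mono 0 fun u hu => Set.mem_compl_singleton_iff.2 (ne_of_gt hu))
  refine ge_of_tendsto hmono ?_
  filter_upwards [Ioo_mem_nhdsGT_of_mem (Set.mem_Ico.2 ⟨le_refl (0:ℝ), ht₀⟩)] with u hu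
  have hu0 : 0 < u := hu.1
  have hut : u < t₀ := hu.2
  have hab : (1 - u / t₀) + u / t₀ = 1 := by ring
  have ha : 0 ≤ 1 - u / t₀ := by
    have : u / t₀ ≤ 1 := by rw [div_le_one ht₀]; linarith
    linarith
  have hb : 0 ≤ u / t₀ := by positivity
  have hcomb : (1 - u / t₀) • x + (u / t₀) • (x + t₀ • v) = x + u • v := by
    have hbt : (u / t₀) * t₀ = u := div_mul_cancel₀ u (ne_of_gt ht₀)
    rw [smul_add, ← add_assoc, ← add_smul, hab, one_smul, smul_smul, hbt]
  have hineq := hconc.2 hx hx' ha hb hab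
  rw [hcomb] at hineq
  have hslope_eq : slope (fun u : ℝ => f (x + u • v)) 0 u
      = (f (x + u • v) - f x) / u := by
    rw [slope_def_field]
    simp
  rw [hslope_eq]
  rw [div_le_div_iff₀ ht₀ hu0]
  have hineq' : (1 - u / t₀) * f x + (u / t₀) * f (x + t₀ • v) ≤ f (x + u • v) := by
    simpa [smul_eq_mul] using hineq
  have hmul := mul_le_mul_of_nonneg_right hineq' ht₀.le
  have expand : ((1 - u / t₀) * f x + (u / t₀) * f (x + t₀ • v)) * t₀
      = f x * t₀ - u * f x + u * f (x + t₀ • v) := by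
    field_simp
  rw [expand] at hmul
  linarith

lemma fderiv_le_slope {F : Type*} [NormedAddCommGroup F] [NormedSpace ℝ F]
    {s : Set F} {f : F → ℝ} {f' : F →L[ℝ] ℝ} {x v : F} {t₀ : ℝ}
    (hconc : ConcaveOn ℝ s f) (hx : x ∈ s) (hx' : x - t₀ • v ∈ s) (ht₀ : 0 < t₀)
    (hf : HasFDerivAt f f' x) :
    f' v ≤ (f x - f (x - t₀ • v)) / t₀ := by
  have hx'' : x + t₀ • (-v) ∈ s := by rwa [smul_neg, ← sub_eq_add_neg]
  have h := slope_le_fderiv hconc hx hx'' ht₀ hf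
  rw [map_neg] at h
  have he : x + t₀ • (-v) = x - t₀ • v := by rw [smul_neg, ← sub_eq_add_neg]
  rw [he] at h
  have eA : (f x - f (x - t₀ • v)) / t₀ = -((f (x - t₀ • v) - f x) / t₀) := by ring
  linarith [h, eA.ge]

/-- Existence of a supporting affine functional for a concave function on an open convex set. -/
lemma exists_supporting {F : Type*} [NormedAddCommGroup F] [NormedSpace ℝ F]
    {U : Set F} {H : F → ℝ} (hUopen : IsOpen U) (hUconv : Convex ℝ U)
    (hH : ConcaveOn ℝ U H) (hHc : ContinuousOn H U) {q : F} (hq : q ∈ U) :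
    ∃ φ : F →L[ℝ] ℝ, ∀ z ∈ U, H z ≤ H q + φ (z - q) := by
  set s : Set (F × ℝ) := {p | p.1 ∈ U ∧ p.2 < H p.1} with hs
  have hsconv : Convex ℝ s := by
    intro p₁ hp₁ p₂ hp₂ a b ha hb hab
    rcases ha.eq_or_lt with h | h
    · have hb1 : b = 1 := by linarith
      simpa [← h, hb1] using hp₂
    constructor
    · exact hUconv hp₁.1 hp₂.1 ha hb hab
    · have h1 : a * p₁.2 < a * H p₁.1 := by
        exact (mul_lt_mul_iff_right₀ h).2 hp₁.2
      have h2 : b * p₂.2 ≤ b * H p₂.1 := mul_le_mul_of_nonneg_left hp₂.2.le hb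
      have h3 := hH.2 hp₁.1 hp₂.1 ha hb hab
      have : (a • p₁ + b • p₂).2 = a * p₁.2 + b * p₂.2 := by simp [smul_eq_mul]
      rw [this]
      have h4 : a • H p₁.1 + b • H p₂.1 ≤ H (a • p₁.1 + b • p₂.1) := h3
      simp only [smul_eq_mul] at h4
      have : (a • p₁ + b • p₂).1 = a • p₁.1 + b • p₂.1 := by simp
      rw [this]
      linarith
  have hsopen : IsOpen s := by
    have heq : s = (U ×ˢ (Set.univ : Set ℝ)) ∩
        ((fun p : F × ℝ => p.2 - H p.1) ⁻¹' Set.Iio 0) := by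
      ext p
      simp [hs, sub_neg]
    rw [heq]
    refine ContinuousOn.isOpen_inter_preimage ?_ (hUopen.prod isOpen_univ) isOpen_Iio
    refine ContinuousOn.sub ?_ ?_
    · exact continuous_snd.continuousOn
    · exact hHc.comp continuous_fst.continuousOn (fun p hp => hp.1)
  have hqs : (q, H q) ∉ s := fun h => lt_irrefl _ h.2
  obtain ⟨f, hf⟩ := geometric_hahn_banach_open_point hsconv hsopen hqs
  set g : F →L[ℝ] ℝ := f.comp (ContinuousLinearMap.inl ℝ F ℝ) with hg
  set cv : ℝ := f (0, 1) with hcv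
  have hdec : ∀ (z : F) (y : ℝ), f (z, y) = g z + y * cv := by
    intro z y
    have h1 : (z, y) = (z, (0:ℝ)) + y • ((0:F), (1:ℝ)) := by
      simp
    rw [h1, map_add, f.map_smul]
    simp only [smul_eq_mul, hg, hcv]
    rfl
  have hcpos : 0 < cv := by
    have h1 : (q, H q - 1) ∈ s := ⟨hq, show H q - 1 < H q by linarith⟩
    have h2 := hf _ h1
    rw [hdec, hdec] at h2
    nlinarith
  have key : ∀ z ∈ U, g z + H z * cv ≤ g q + H q * cv := by
    intro z hz
    by_contra hcon
    push_neg at hcon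
    set εv := (g z + H z * cv - (g q + H q * cv)) / (2 * cv) with hεv
    have hεpos : 0 < εv := by
      apply div_pos
      · linarith
      · linarith
    have h1 : (z, H z - εv) ∈ s := ⟨hz, show H z - εv < H z by linarith⟩
    have h2 := hf _ h1
    rw [hdec, hdec] at h2
    have h3 : εv * cv = (g z + H z * cv - (g q + H q * cv)) / 2 := by
      rw [hεv]
      field_simp
    nlinarith
  refine ⟨-(cv⁻¹) • g, fun z hz => ?_⟩
  have h1 := key z hz
  have h2 : (-(cv⁻¹) • g) (z - q) = cv⁻¹ * (g q - g z) := by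
    simp only [ContinuousLinearMap.coe_smul', Pi.smul_apply, map_sub, smul_eq_mul]
    ring
  rw [h2]
  have h3 : H z * cv ≤ H q * cv + (g q - g z) := by linarith
  have h4 := mul_le_mul_of_nonneg_right h3 (inv_nonneg.2 hcpos.le)
  have h5 : cv * cv⁻¹ = 1 := mul_inv_cancel₀ hcpos.ne'
  calc H z = H z * cv * cv⁻¹ := by rw [mul_assoc, h5, mul_one]
  _ ≤ (H q * cv + (g q - g z)) * cv⁻¹ := h4
  _ = H q * (cv * cv⁻¹) + cv⁻¹ * (g q - g z) := by ring
  _ = H q + cv⁻¹ * (g q - g z) := by rw [h5, mul_one]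
/-- Weighted soft-min of affine functions is concave (log-sum-exp convexity). -/
lemma concaveOn_softmin {F : Type*} [NormedAddCommGroup F] [NormedSpace ℝ F] {s : Set F}
    (hs : Convex ℝ s) (T : Finset ℕ) (hT : T.Nonempty) {w : ℕ → ℝ} (hw : ∀ k, 0 < w k)
    {A : ℕ → F → ℝ}
    (hA : ∀ (k : ℕ) (x y : F) (a b : ℝ), a + b = 1 →
      A k (a • x + b • y) = a * A k x + b * A k y)
    {c : ℝ} (hc : 0 < c) :
    ConcaveOn ℝ s (fun x => -c⁻¹ * Real.log (∑ k ∈ T, w k * Real.exp (-c * A k x))) := by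
  set S : F → ℝ := fun x => ∑ k ∈ T, w k * Real.exp (-c * A k x) with hS
  have hSpos : ∀ x, 0 < S x := fun x =>
    Finset.sum_pos (fun k _ => mul_pos (hw k) (Real.exp_pos _)) hT
  have hV : ConvexOn ℝ s (fun x => Real.log (S x)) := by
    refine ⟨hs, fun x hx y hy a b ha hb hab => ?_⟩
    rcases ha.eq_or_lt with h | ha'
    · have hb1 : b = 1 := by linarith
      simp [← h, hb1]
    rcases hb.eq_or_lt with h | hb'
    · have ha1 : a = 1 := by linarith
      simp [← h, ha1]
    have ha1 : a < 1 := by linarith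
    set u : ℕ → ℝ := fun k => w k * Real.exp (-c * A k x) with hu
    set vv : ℕ → ℝ := fun k => w k * Real.exp (-c * A k y) with hvv
    have hupos : ∀ k, 0 < u k := fun k => mul_pos (hw k) (Real.exp_pos _)
    have hvpos : ∀ k, 0 < vv k := fun k => mul_pos (hw k) (Real.exp_pos _)
    set f : ℕ → ℝ := fun k => u k ^ a with hf
    set g : ℕ → ℝ := fun k => vv k ^ b with hg
    have hpq : Real.HolderConjugate (1/a) (1/b) := by
      rw [Real.holderConjugate_iff]
      constructor
      · exact one_lt_one_div ha' ha1
      · rw [one_div, one_div, inv_inv, inv_inv]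
        exact hab
    have key1 : ∀ k, w k * Real.exp (-c * A k (a • x + b • y)) = f k * g k := by
      intro k
      have e1 : f k = Real.exp (Real.log (u k) * a) := Real.rpow_def_of_pos (hupos k) a
      have e2 : g k = Real.exp (Real.log (vv k) * b) := Real.rpow_def_of_pos (hvpos k) b
      have hlogu : Real.log (u k) = Real.log (w k) + -c * A k x := by
        rw [hu]
        rw [Real.log_mul (hw k).ne' (Real.exp_pos _).ne', Real.log_exp]
      have hlogv : Real.log (vv k) = Real.log (w k) + -c * A k y := by
        rw [hvv]
        rw [Real.log_mul (hw k).ne' (Real.exp_pos _).ne', Real.log_exp]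
      rw [e1, e2, ← Real.exp_add, hlogu, hlogv, hA k x y a b hab]
      have heq : (Real.log (w k) + -c * A k x) * a + (Real.log (w k) + -c * A k y) * b
          = Real.log (w k) + -c * (a * A k x + b * A k y) := by
        have h1 : Real.log (w k) * a + Real.log (w k) * b = Real.log (w k) := by
          rw [← mul_add, hab, mul_one]
        nlinarith [h1]
      rw [heq, Real.exp_add, Real.exp_log (hw k)]
    have hsum1 : ∑ k ∈ T, |f k| ^ (1/a) = S x := by
      refine Finset.sum_congr rfl fun k _ => ?_
      show |u k ^ a| ^ (1/a) = u k
      rw [abs_of_nonneg (Real.rpow_nonneg (hupos k).le a),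
        ← Real.rpow_mul (hupos k).le, mul_one_div, div_self ha'.ne', Real.rpow_one]
    have hsum2 : ∑ k ∈ T, |g k| ^ (1/b) = S y := by
      refine Finset.sum_congr rfl fun k _ => ?_
      show |vv k ^ b| ^ (1/b) = vv k
      rw [abs_of_nonneg (Real.rpow_nonneg (hvpos k).le b),
        ← Real.rpow_mul (hvpos k).le, mul_one_div, div_self hb'.ne', Real.rpow_one]
    have hhold := Real.inner_le_Lp_mul_Lq T f g hpq
    rw [hsum1, hsum2, one_div_one_div, one_div_one_div] at hhold
    have hSc : S (a • x + b • y) = ∑ k ∈ T, f k * g k :=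
      Finset.sum_congr rfl fun k _ => key1 k
    have hlog : Real.log (S (a • x + b • y)) ≤ Real.log (S x ^ a * S y ^ b) := by
      refine Real.log_le_log (hSpos _) ?_
      rw [hSc]
      exact hhold
    have hlogeq : Real.log (S x ^ a * S y ^ b) = a * Real.log (S x) + b * Real.log (S y) := by
      rw [Real.log_mul (Real.rpow_pos_of_pos (hSpos x) a).ne'
        (Real.rpow_pos_of_pos (hSpos y) b).ne', Real.log_rpow (hSpos x),
        Real.log_rpow (hSpos y)]
    simp only [smul_eq_mul]
    calc Real.log (S (a • x + b • y)) ≤ Real.log (S x ^ a * S y ^ b) := hlog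
    _ = a * Real.log (S x) + b * Real.log (S y) := hlogeq
  have hfinal := (hV.neg).smul (le_of_lt (inv_pos.2 hc))
  convert hfinal using 2 with x
  rotate_left 3
  simp only [Pi.smul_apply, Pi.neg_apply, smul_eq_mul]
  ring
  all_goals rfl
lemma convex_openSimplex (d : ℕ) : Convex ℝ (openSimplex d) := by
  intro x hx y hy a b ha hb hab
  constructor
  · intro i
    rcases ha.eq_or_lt with h | h
    · have hb1 : b = 1 := by linarith
      simpa [← h, hb1] using hy.1 i
    · have h1 : 0 < a * x i := mul_pos h (hx.1 i)
      have h2 : 0 ≤ b * y i := mul_nonneg hb (hy.1 i).le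
      have : (a • x + b • y) i = a * x i + b * y i := by simp [smul_eq_mul]
      rw [this]; linarith
  · have : ∑ k, (a • x + b • y) k = a * ∑ k, x k + b * ∑ k, y k := by
      simp [Finset.sum_add_distrib, Finset.mul_sum]
    rw [this, hx.2, hy.2]; linarith

lemma sum_w_eq (m : ℕ) : ∑ k ∈ Finset.range m, (2:ℝ)⁻¹ ^ (k+1) = 1 - (2:ℝ)⁻¹ ^ m := by
  induction m with
  | zero => simp
  | succ m ih =>
    rw [Finset.sum_range_succ, ih]
    ring

/-- Analyticity of the weighted soft-min. -/
lemma contDiff_softmin {F : Type*} [NormedAddCommGroup F] [NormedSpace ℝ F]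
    (T : Finset ℕ) (hT : T.Nonempty) {w : ℕ → ℝ} (hw : ∀ k, 0 < w k)
    {A : ℕ → F → ℝ} (hA : ∀ k, ContDiff ℝ (⊤ : ℕ∞) (A k)) {c : ℝ} (hc : 0 < c) :
    ContDiff ℝ (⊤ : ℕ∞) (fun x => -c⁻¹ * Real.log (∑ k ∈ T, w k * Real.exp (-c * A k x))) := by
  have hSpos : ∀ x : F, 0 < ∑ k ∈ T, w k * Real.exp (-c * A k x) := fun x =>
    Finset.sum_pos (fun k _ => mul_pos (hw k) (Real.exp_pos _)) hT
  have hSsm : ContDiff ℝ (⊤ : ℕ∞) (fun x : F => ∑ k ∈ T, w k * Real.exp (-c * A k x)) :=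
    ContDiff.sum fun k _ =>
      contDiff_const.mul (Real.contDiff_exp.comp (contDiff_const.mul (hA k)))
  have hlogsm : ContDiff ℝ (⊤ : ℕ∞) (fun x : F => Real.log (∑ k ∈ T, w k * Real.exp (-c * A k x))) := by
    rw [contDiff_iff_contDiffAt]
    intro x
    exact (Real.contDiffAt_log.2 (hSpos x).ne').comp x hSsm.contDiffAt
  exact contDiff_const.mul hlogsm
end S6

set_option maxHeartbeats 1000000 in
open S6 in
theorem statement6 {d : ℕ} (hd : 2 ≤ d)
    (G : (Fin d → ℝ) → ℝ)
    (hGpos : ∀ x ∈ openSimplex d, 0 < G x)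
    (hGconc : ConcaveOn ℝ (openSimplex d) G) :
    ∃ Gn : ℕ → (Fin d → ℝ) → ℝ,
      (∀ n, ContDiff ℝ (⊤ : ℕ∞) (Gn n)) ∧
      (∀ n, ∀ x ∈ openSimplex d, 0 < Gn n x) ∧
      (∀ n, ConcaveOn ℝ (openSimplex d) (Gn n)) ∧
      (∀ x ∈ openSimplex d, Tendsto (fun n => Gn n x) atTop (nhds (G x))) ∧
      (∀ x ∈ openSimplex d, ∀ L : (Fin d → ℝ) →L[ℝ] ℝ,
        HasFDerivWithinAt G L {y : Fin d → ℝ | ∑ i, y i = 1} x →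
        ∀ i j : Fin d,
          Tendsto (fun n => dirDeriv (Gn n) x i j) atTop
            (nhds (L (Pi.single j 1 - Pi.single i 1)))) := by
  classical
  have hd0 : 0 < d := by omega
  have hdR : (0:ℝ) < d := by exact_mod_cast hd0
  set Hf : (Fin d → ℝ) → ℝ := fun z => G (proj d z) with hHfdef
  have hHconc : ConcaveOn ℝ (Upos d) Hf := concaveOn_Upos hd0 hGconc
  have hUopen : IsOpen (Upos d) := isOpen_Upos
  have hUconv : Convex ℝ (Upos d) := hHconc.1
  have hHcont : ContinuousOn Hf (Upos d) := hHconc.continuousOn hUopen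
  have hHlip : LocallyLipschitzOn (Upos d) Hf := hHconc.locallyLipschitzOn hUopen
  have hsimplexU : openSimplex d ⊆ Upos d := fun x hx => mem_Upos_of_mem_simplex hx
  have hHfsimplex : ∀ x ∈ openSimplex d, Hf x = G x := fun x hx => by
    show G (proj d x) = G x
    rw [proj_eq_self hx.2]
  have hbary : (fun _ : Fin d => (d:ℝ)⁻¹) ∈ openSimplex d := by
    constructor
    · intro i; positivity
    · rw [Finset.sum_const, Finset.card_univ, Fintype.card_fin, nsmul_eq_mul]
      field_simp
  -- countable dense family of supporting points
  obtain ⟨D, hDc, hDd⟩ := TopologicalSpace.exists_countable_dense (Fin d → ℝ)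
  have hQc : (D ∩ Upos d).Countable := hDc.mono Set.inter_subset_left
  have hQne : (D ∩ Upos d).Nonempty := by
    obtain ⟨p, hp⟩ := hDd.inter_open_nonempty _ hUopen ⟨_, hsimplexU hbary⟩
    exact ⟨p, hp.2, hp.1⟩
  obtain ⟨q, hqr⟩ := hQc.exists_eq_range hQne
  have hqU : ∀ k, q k ∈ Upos d := fun k => by
    have : q k ∈ D ∩ Upos d := by rw [hqr]; exact Set.mem_range_self k
    exact this.2
  have hdense : ∀ z ∈ Upos d, ∀ r > 0, ∃ k, dist (q k) z < r := by
    intro z hz r hr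
    have hopen : IsOpen (Metric.ball z r ∩ Upos d) := Metric.isOpen_ball.inter hUopen
    have hne : (Metric.ball z r ∩ Upos d).Nonempty := ⟨z, Metric.mem_ball_self hr, hz⟩
    obtain ⟨p, hp⟩ := hDd.inter_open_nonempty _ hopen hne
    have hpQ : p ∈ D ∩ Upos d := ⟨hp.2, hp.1.2⟩
    rw [hqr] at hpQ
    obtain ⟨k, rfl⟩ := hpQ
    exact ⟨k, by have := hp.1.1; rwa [Metric.mem_ball] at this⟩
  -- supporting functionals
  choose φ hφ using fun k => exists_supporting hUopen hUconv hHconc hHcont (hqU k)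
  set A : ℕ → (Fin d → ℝ) → ℝ := fun k z => Hf (q k) + (φ k) (z - q k) with hAdef
  have hAaffine : ∀ (k : ℕ) (x y : Fin d → ℝ) (a b : ℝ), a + b = 1 →
      A k (a • x + b • y) = a * A k x + b * A k y := by
    intro k x y a b hab
    show Hf (q k) + (φ k) (a • x + b • y - q k)
        = a * (Hf (q k) + (φ k) (x - q k)) + b * (Hf (q k) + (φ k) (y - q k))
    rw [map_sub, map_add, map_smul, map_smul, map_sub, map_sub]
    simp only [smul_eq_mul]
    linear_combination ((φ k) (q k) - Hf (q k)) * hab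
  have hAge : ∀ k, ∀ z ∈ Upos d, Hf z ≤ A k z := fun k z hz => hφ k z hz
  have hAsm : ∀ k, ContDiff ℝ (⊤ : ℕ∞) (A k) := fun k =>
    contDiff_const.add ((φ k).contDiff.comp (contDiff_id.sub contDiff_const))
  -- weights and temperatures
  set w : ℕ → ℝ := fun k => (2:ℝ)⁻¹ ^ (k+1) with hwdef
  have hwpos : ∀ k, 0 < w k := fun k => by positivity
  have hwsum_lt : ∀ m : ℕ, ∑ k ∈ Finset.range m, w k < 1 := fun m => by
    have h1 : (0:ℝ) < (2:ℝ)⁻¹ ^ m := by positivity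
    have := sum_w_eq m
    rw [hwdef]
    rw [this]
    linarith
  set cs : ℕ → ℝ := fun n => (n:ℝ) + 1 with hcsdef
  have hcpos : ∀ n, 0 < cs n := fun n => by positivity
  set Gn : ℕ → (Fin d → ℝ) → ℝ := fun n x =>
    -(cs n)⁻¹ * Real.log (∑ k ∈ Finset.range (n+1), w k * Real.exp (-(cs n) * A k x))
    with hGndef
  have hrangene : ∀ n : ℕ, (Finset.range (n+1)).Nonempty :=
    fun n => ⟨0, Finset.mem_range.2 (Nat.succ_pos n)⟩
  have hSpos : ∀ n (x : Fin d → ℝ),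
      0 < ∑ k ∈ Finset.range (n+1), w k * Real.exp (-(cs n) * A k x) := fun n x =>
    Finset.sum_pos (fun k _ => mul_pos (hwpos k) (Real.exp_pos _)) (hrangene n)
  -- lower bound : G x < Gn n x on the simplex
  have hlb : ∀ n, ∀ x ∈ openSimplex d, G x < Gn n x := by
    intro n x hx
    have hxU := hsimplexU hx
    have hterm : ∀ k ∈ Finset.range (n+1),
        w k * Real.exp (-(cs n) * A k x) ≤ w k * Real.exp (-(cs n) * G x) := by
      intro k _
      refine mul_le_mul_of_nonneg_left ?_ (hwpos k).le
      refine Real.exp_le_exp.2 ?_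
      have h1 : G x ≤ A k x := by
        have := hAge k x hxU
        rwa [hHfsimplex x hx] at this
      have h2 : -(cs n) ≤ 0 := by linarith [hcpos n]
      exact mul_le_mul_of_nonpos_left h1 h2
    have hSlt : ∑ k ∈ Finset.range (n+1), w k * Real.exp (-(cs n) * A k x)
        < Real.exp (-(cs n) * G x) := by
      calc ∑ k ∈ Finset.range (n+1), w k * Real.exp (-(cs n) * A k x)
          ≤ ∑ k ∈ Finset.range (n+1), w k * Real.exp (-(cs n) * G x) :=
            Finset.sum_le_sum hterm
      _ = (∑ k ∈ Finset.range (n+1), w k) * Real.exp (-(cs n) * G x) := by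
            rw [← Finset.sum_mul]
      _ < 1 * Real.exp (-(cs n) * G x) :=
            mul_lt_mul_of_pos_right (hwsum_lt _) (Real.exp_pos _)
      _ = Real.exp (-(cs n) * G x) := one_mul _
    have hlog : Real.log (∑ k ∈ Finset.range (n+1), w k * Real.exp (-(cs n) * A k x))
        < -(cs n) * G x := by
      have := Real.log_lt_log (hSpos n x) hSlt
      rwa [Real.log_exp] at this
    have h1 : -(cs n)⁻¹ * (-(cs n) * G x) = G x := by
      field_simp
      exact mul_div_cancel_left₀ _ (hcpos n).ne'
    calc G x = -(cs n)⁻¹ * (-(cs n) * G x) := h1.symm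
    _ < Gn n x := by
        show _ < -(cs n)⁻¹ * Real.log _
        have hneg : -(cs n)⁻¹ < 0 := neg_lt_zero.2 (inv_pos.2 (hcpos n))
        exact mul_lt_mul_of_neg_left hlog hneg
  -- upper bound via each affine majorant
  have hub : ∀ n (x : Fin d → ℝ) (k : ℕ), k < n + 1 →
      Gn n x ≤ A k x + ((k:ℝ)+1) * Real.log 2 * (cs n)⁻¹ := by
    intro n x k hk
    have hterm_le : w k * Real.exp (-(cs n) * A k x)
        ≤ ∑ m ∈ Finset.range (n+1), w m * Real.exp (-(cs n) * A m x) :=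
      Finset.single_le_sum (f := fun m => w m * Real.exp (-(cs n) * A m x))
        (fun m _ => (mul_pos (hwpos m) (Real.exp_pos _)).le) (Finset.mem_range.2 hk)
    have hlogwk : Real.log (w k) = -(((k:ℝ)+1) * Real.log 2) := by
      rw [hwdef]
      show Real.log ((2:ℝ)⁻¹ ^ (k+1)) = _
      rw [Real.log_pow, Real.log_inv]
      push_cast
      ring
    have hloggel : Real.log (w k) + -(cs n) * A k x
        ≤ Real.log (∑ m ∈ Finset.range (n+1), w m * Real.exp (-(cs n) * A m x)) := by
      have h1 : Real.log (w k * Real.exp (-(cs n) * A k x))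
          = Real.log (w k) + -(cs n) * A k x := by
        rw [Real.log_mul (hwpos k).ne' (Real.exp_pos _).ne', Real.log_exp]
      rw [← h1]
      exact Real.log_le_log (mul_pos (hwpos k) (Real.exp_pos _)) hterm_le
    have hmul := mul_le_mul_of_nonpos_left hloggel
      (show -(cs n)⁻¹ ≤ 0 from (neg_lt_zero.2 (inv_pos.2 (hcpos n))).le)
    have heq : -(cs n)⁻¹ * (Real.log (w k) + -(cs n) * A k x)
        = A k x + ((k:ℝ)+1) * Real.log 2 * (cs n)⁻¹ := by
      rw [hlogwk]
      have hcne : cs n ≠ 0 := (hcpos n).ne'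
      field_simp
      ring
    show -(cs n)⁻¹ * Real.log _ ≤ _
    rw [← heq]
    exact hmul
  -- smoothness
  have hsmooth : ∀ n, ContDiff ℝ (⊤ : ℕ∞) (Gn n) :=
    fun n => contDiff_softmin _ (hrangene n) hwpos hAsm (hcpos n)
  -- concavity
  have hconcGn : ∀ n, ConcaveOn ℝ (openSimplex d) (Gn n) := fun n =>
    concaveOn_softmin (convex_openSimplex d) _ (hrangene n) hwpos hAaffine (hcpos n)
  -- pointwise convergence
  have hval : ∀ x ∈ openSimplex d, Tendsto (fun n => Gn n x) atTop (nhds (G x)) := by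
    intro x hx
    have hxU := hsimplexU hx
    obtain ⟨K, t, ht, hlipK⟩ := hHlip hxU
    have htn : t ∩ Upos d ∈ nhds x := by
      have h1 : t ∈ nhds x := by
        rwa [nhdsWithin_eq_nhds.2 (hUopen.mem_nhds hxU)] at ht
      exact Filter.inter_mem h1 (hUopen.mem_nhds hxU)
    obtain ⟨r, hr0, hball⟩ := Metric.mem_nhds_iff.1 htn
    have hK0 : (0:ℝ) ≤ (K:ℝ) := K.coe_nonneg
    have happrox : ∀ η > 0, ∃ k, A k x < G x + η := by
      intro η hη
      set s0 := min (r/2) (η / (2*(K:ℝ)+2)) with hs0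
      have hs0pos : 0 < s0 := lt_min (by linarith) (div_pos hη (by positivity))
      obtain ⟨k, hk⟩ := hdense x hxU s0 hs0pos
      refine ⟨k, ?_⟩
      have hs0r : s0 ≤ r/2 := min_le_left _ _
      have hqball : q k ∈ Metric.ball x r := by
        rw [Metric.mem_ball]
        calc dist (q k) x < s0 := hk
        _ ≤ r/2 := hs0r
        _ < r := by linarith
      have hxball : x ∈ Metric.ball x r := Metric.mem_ball_self hr0
      have hmirball : (2:ℝ) • q k - x ∈ Metric.ball x r := by
        rw [Metric.mem_ball, dist_eq_norm]
        have he : (2:ℝ) • q k - x - x = (2:ℝ) • (q k - x) := by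
          rw [two_smul, two_smul]; abel
        have hn2 : ‖(2:ℝ)‖ = 2 := by norm_num
        rw [he, norm_smul, hn2]
        have hqxn : ‖q k - x‖ = dist (q k) x := (dist_eq_norm _ _).symm
        rw [hqxn]
        linarith [hk, hs0r]
      have hq_t := hball hqball
      have hmir_t := hball hmirball
      have hx_t := hball hxball
      -- bound φ k (x - q k) from above using the mirror point
      have hsupp := hφ k _ hmir_t.2
      have harg : (2:ℝ) • q k - x - q k = -(x - q k) := by
        rw [two_smul]; abel
      rw [harg, map_neg] at hsupp
      -- hsupp : Hf (2 • q k - x) ≤ Hf (q k) + -(φ k) (x - q k)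
      have hdistmir : dist (q k) ((2:ℝ) • q k - x) = dist (q k) x := by
        rw [dist_eq_norm, dist_eq_norm]
        have : q k - ((2:ℝ) • q k - x) = x - q k := by rw [two_smul]; abel
        rw [this, norm_sub_rev]
      have hl1 : dist (Hf (q k)) (Hf ((2:ℝ) • q k - x)) ≤ (K:ℝ) * dist (q k) ((2:ℝ) • q k - x) :=
        hlipK.dist_le_mul _ hq_t.1 _ hmir_t.1
      have hl2 : dist (Hf (q k)) (Hf x) ≤ (K:ℝ) * dist (q k) x :=
        hlipK.dist_le_mul _ hq_t.1 _ hx_t.1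
      rw [hdistmir] at hl1
      rw [Real.dist_eq] at hl1 hl2
      have hb1 : Hf (q k) - Hf ((2:ℝ) • q k - x) ≤ (K:ℝ) * dist (q k) x :=
        le_trans (le_abs_self _) hl1
      have hb2 : Hf (q k) - Hf x ≤ (K:ℝ) * dist (q k) x :=
        le_trans (le_abs_self _) hl2
      have hφb : (φ k) (x - q k) ≤ (K:ℝ) * dist (q k) x := by linarith
      have hAx : A k x ≤ Hf x + 2 * (K:ℝ) * dist (q k) x := by
        show Hf (q k) + (φ k) (x - q k) ≤ _
        linarith [hb2, hφb]
      have hs02 : s0 * (2*(K:ℝ)+2) ≤ η := by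
        have := min_le_right (r/2) (η / (2*(K:ℝ)+2))
        rw [← hs0] at this
        have hpos : (0:ℝ) < 2*(K:ℝ)+2 := by linarith
        calc s0 * (2*(K:ℝ)+2) ≤ (η / (2*(K:ℝ)+2)) * (2*(K:ℝ)+2) :=
          mul_le_mul_of_nonneg_right this hpos.le
        _ = η := by field_simp
      have hKd : 2 * (K:ℝ) * dist (q k) x < η := by
        have hdist0 : (0:ℝ) ≤ dist (q k) x := dist_nonneg
        nlinarith [hk, hs0pos]
      rw [hHfsimplex x hx] at hAx
      linarith
    -- conclude the convergence
    rw [Metric.tendsto_atTop]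
    intro η hη
    obtain ⟨k₀, hk₀⟩ := happrox (η/2) (by linarith)
    have hlog2 : 0 < Real.log 2 := Real.log_pos one_lt_two
    set C : ℝ := ((k₀:ℝ)+1) * Real.log 2 * (2/η) with hC
    refine ⟨max k₀ ⌈C⌉₊, fun n hn => ?_⟩
    have hnk : k₀ < n + 1 := by
      have := le_trans (le_max_left k₀ ⌈C⌉₊) hn
      omega
    have hcn : C ≤ cs n := by
      have h1 : C ≤ (⌈C⌉₊ : ℝ) := Nat.le_ceil C
      have h2 : (⌈C⌉₊ : ℝ) ≤ (n:ℝ) := by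
        exact_mod_cast le_trans (le_max_right k₀ ⌈C⌉₊) hn
      have : cs n = (n:ℝ) + 1 := rfl
      linarith
    have htail : ((k₀:ℝ)+1) * Real.log 2 * (cs n)⁻¹ ≤ η/2 := by
      have hcsn := hcpos n
      rw [← div_eq_mul_inv, div_le_iff₀ hcsn]
      have hmul := mul_le_mul_of_nonneg_right hcn (show (0:ℝ) ≤ η/2 by linarith)
      have hCe : C * (η/2) = ((k₀:ℝ)+1) * Real.log 2 := by
        rw [hC]; field_simp
      rw [hCe] at hmul
      linarith [hmul]
    have h1 := hub n x k₀ hnk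
    have h2 := hlb n x hx
    rw [Real.dist_eq, abs_lt]
    constructor
    · linarith
    · linarith [hk₀, htail, h1]
  -- assemble everything
  refine ⟨Gn, hsmooth, fun n x hx => lt_trans (hGpos x hx) (hlb n x hx), hconcGn, hval, ?_⟩
  -- derivative convergence
  intro x hx L hL i j
  set v : Fin d → ℝ := Pi.single j (1:ℝ) - Pi.single i 1 with hv
  have hsumv : ∑ k, v k = 0 := by
    rw [hv]
    simp [Pi.sub_apply, Finset.sum_sub_distrib, Pi.single_apply]
  -- the function along the line
  set gl : ℝ → ℝ := fun u => G (x + u • v) with hgl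
  have hmaps : Set.MapsTo (fun u : ℝ => x + u • v) Set.univ
      {y : Fin d → ℝ | ∑ i, y i = 1} := by
    intro u _
    show ∑ k, (x + u • v) k = 1
    have : ∀ k, (x + u • v) k = x k + u * v k := fun k => by simp [smul_eq_mul]
    simp only [this]
    rw [Finset.sum_add_distrib, ← Finset.mul_sum, hsumv, hx.2, mul_zero, add_zero]
  have hl0 : HasFDerivAt (fun u : ℝ => x + u • v) ((1 : ℝ →L[ℝ] ℝ).smulRight v) 0 :=
    ((1 : ℝ →L[ℝ] ℝ).smulRight v).hasFDerivAt.const_add x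
  have hLat : HasFDerivWithinAt G L {y : Fin d → ℝ | ∑ i, y i = 1} ((fun u : ℝ => x + u • v) 0) := by
    have h0 : (fun u : ℝ => x + u • v) 0 = x := by simp
    rwa [h0]
  have hgl' : HasDerivAt gl (L v) 0 := by
    have hcomp := hLat.comp (0:ℝ) (hl0.hasFDerivWithinAt (s := Set.univ)) hmaps
    rw [hasFDerivWithinAt_univ] at hcomp
    have h2 := hcomp.hasDerivAt
    have h3 : (L.comp ((1 : ℝ →L[ℝ] ℝ).smulRight v)) 1 = L v := by simp
    rw [h3] at h2
    exact h2
  have hslope := hasDerivAt_iff_tendsto_slope.1 hgl'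
  have hev_simplex : ∀ᶠ u in nhds (0:ℝ), x + u • v ∈ openSimplex d := by
    have hcoord : ∀ k : Fin d, ∀ᶠ u in nhds (0:ℝ), 0 < (x + u • v) k := by
      intro k
      have hcont : Continuous fun u : ℝ => (x + u • v) k := by
        simp only [Pi.add_apply, Pi.smul_apply, smul_eq_mul]
        exact continuous_const.add (continuous_id.mul continuous_const)
      have htt : Filter.Tendsto (fun u : ℝ => (x + u • v) k) (nhds 0) (nhds (x k)) := by
        have := hcont.tendsto (0:ℝ)
        simpa using this
      exact htt.eventually (eventually_gt_nhds (hx.1 k))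
    have hall := (Filter.eventually_all (ι := Fin d)).2 hcoord
    filter_upwards [hall] with u hu
    exact ⟨hu, hmaps (Set.mem_univ u)⟩
  have hdiff : ∀ n, HasFDerivAt (Gn n) (fderiv ℝ (Gn n) x) x := fun n =>
    (((hsmooth n).differentiable (by simp)) x).hasFDerivAt
  apply tendsto_order.2
  constructor
  · intro b hb
    have h1 : ∀ᶠ u in nhdsWithin (0:ℝ) (Set.Ioi 0), b < slope gl 0 u :=
      (hslope.mono_left (nhdsWithin_mono _ fun u hu =>
        Set.mem_compl_singleton_iff.2 (ne_of_gt hu))).eventually (eventually_gt_nhds hb)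
    have h2 : ∀ᶠ u in nhdsWithin (0:ℝ) (Set.Ioi 0), x + u • v ∈ openSimplex d :=
      eventually_nhdsWithin_of_eventually_nhds hev_simplex
    have h3 : ∀ᶠ u in nhdsWithin (0:ℝ) (Set.Ioi 0), (0:ℝ) < u :=
      eventually_mem_nhdsWithin
    obtain ⟨u, hub', husimp, hupos⟩ := (h1.and (h2.and h3)).exists
    have hslope_val : slope gl 0 u = (G (x + u • v) - G x) / u := by
      rw [slope_def_field]
      have hgl0 : gl 0 = G x := by simp [hgl]
      have hglu : gl u = G (x + u • v) := rfl
      rw [hgl0, hglu, sub_zero]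
    have hbound : ∀ n, (Gn n (x + u • v) - Gn n x) / u ≤ dirDeriv (Gn n) x i j := by
      intro n
      exact slope_le_fderiv (hconcGn n) hx husimp hupos (hdiff n)
    have htend : Tendsto (fun n => (Gn n (x + u • v) - Gn n x) / u) atTop
        (nhds ((G (x + u • v) - G x) / u)) :=
      ((hval _ husimp).sub (hval x hx)).div_const u
    have hblt : b < (G (x + u • v) - G x) / u := by rw [← hslope_val]; exact hub'
    have hev := htend.eventually (eventually_gt_nhds hblt)
    filter_upwards [hev] with n hn
    exact lt_of_lt_of_le hn (hbound n)
  · intro b hb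
    have h1 : ∀ᶠ u in nhdsWithin (0:ℝ) (Set.Iio 0), slope gl 0 u < b :=
      (hslope.mono_left (nhdsWithin_mono _ fun u hu =>
        Set.mem_compl_singleton_iff.2 (ne_of_lt hu))).eventually (eventually_lt_nhds hb)
    have h2 : ∀ᶠ u in nhdsWithin (0:ℝ) (Set.Iio 0), x + u • v ∈ openSimplex d :=
      eventually_nhdsWithin_of_eventually_nhds hev_simplex
    have h3 : ∀ᶠ u in nhdsWithin (0:ℝ) (Set.Iio 0), u < (0:ℝ) :=
      eventually_mem_nhdsWithin
    obtain ⟨u, hub', husimp, huneg⟩ := (h1.and (h2.and h3)).exists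
    have hupos : 0 < -u := by linarith
    have hmem : x - (-u) • v ∈ openSimplex d := by
      have : x - (-u) • v = x + u • v := by
        rw [neg_smul, sub_neg_eq_add]
      rwa [this]
    have hbound : ∀ n, dirDeriv (Gn n) x i j ≤ (Gn n x - Gn n (x - (-u) • v)) / (-u) := by
      intro n
      exact fderiv_le_slope (hconcGn n) hx hmem hupos (hdiff n)
    have hrw : ∀ n, (Gn n x - Gn n (x - (-u) • v)) / (-u) = (Gn n (x + u • v) - Gn n x) / u := by
      intro n
      have he : x - (-u) • v = x + u • v := by rw [neg_smul, sub_neg_eq_add]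
      rw [he]
      rw [div_neg, ← neg_div, neg_sub]
    have hslope_val : slope gl 0 u = (G (x + u • v) - G x) / u := by
      rw [slope_def_field]
      have hgl0 : gl 0 = G x := by simp [hgl]
      have hglu : gl u = G (x + u • v) := rfl
      rw [hgl0, hglu, sub_zero]
    have htend : Tendsto (fun n => (Gn n (x + u • v) - Gn n x) / u) atTop
        (nhds ((G (x + u • v) - G x) / u)) :=
      ((hval _ husimp).sub (hval x hx)).div_const u
    have hblt : (G (x + u • v) - G x) / u < b := by rw [← hslope_val]; exact hub'
    have hev := htend.eventually (eventually_lt_nhds hblt)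
    filter_upwards [hev] with n hn
    calc dirDeriv (Gn n) x i j ≤ (Gn n x - Gn n (x - (-u) • v)) / (-u) := hbound n
    _ = (Gn n (x + u • v) - Gn n x) / u := hrw n
    _ < b := hn
end

section
/- Let a, v, w ∈ ℝ^d have strictly positive coordinates, let α ∈ (0,1), and let D be a nonempty relatively open subset of the open unit simplex Δ such that log(aᵀx) = α log(vᵀx) + (1−α) log(wᵀx) for every x ∈ D. Then there exist constants c₁, c₂ > 0 such that a = c₁ v and a = c₂ w. -/
open scoped BigOperators

/-!
Restrict the identity to the segment from a point `x₀ ∈ D` towards a vertex `eᵢ` of the simplex.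
Along it the three linear forms are affine in `t`, and differentiating the identity twice at
`t = 0` shows that their logarithmic derivatives `P, Q, R` satisfy `R = αP + (1-α)Q` and
`R² = αP² + (1-α)Q²`. Strict convexity of the square forces `P = Q = R`, i.e.
`vᵢ / vᵀx₀ = wᵢ / wᵀx₀ = aᵢ / aᵀx₀` for every `i`.
-/

open Real Filter Topology Set

lemma eq_of_sq_convexComb_eq_convexComb_sq {α x y : ℝ} (hα : α ∈ Ioo 0 1)
    (h : (α * x + (1 - α) * y) ^ 2 = α * x ^ 2 + (1 - α) * y ^ 2) : x = y := by
  have hvar : α * (1 - α) * (x - y) ^ 2 = 0 := by linear_combination -h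
  have hα' : α * (1 - α) ≠ 0 := by nlinarith [hα.1, hα.2]
  simpa [hα', sub_eq_zero] using hvar

lemma hasDerivAt_log_affine {c s t : ℝ} (h : c + t * s ≠ 0) :
    HasDerivAt (fun τ => log (c + τ * s)) (s / (c + t * s)) t := by
  simpa using (((hasDerivAt_id t).mul_const s).const_add c).log h

lemma hasDerivAt_div_affine {c : ℝ} (s : ℝ) (h : c ≠ 0) :
    HasDerivAt (fun τ => s / (c + τ * s)) (-(s / c) ^ 2) 0 := by
  have hden : HasDerivAt (fun τ => c + τ * s) s 0 := by
    simpa using ((hasDerivAt_id (0 : ℝ)).mul_const s).const_add c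
  refine ((hasDerivAt_const (0 : ℝ) s).div hden (by simpa using h)).congr_deriv ?_
  simp only [zero_mul, add_zero, zero_sub]
  ring

theorem div_eq_div_of_log_eq_convexComb_log {α A V W p q r : ℝ} (hα : α ∈ Ioo 0 1)
    (hA : A ≠ 0) (hV : V ≠ 0) (hW : W ≠ 0)
    (h : ∀ᶠ t in 𝓝 0, log (A + t * r) = α * log (V + t * p) + (1 - α) * log (W + t * q)) :
    p / V = r / A ∧ q / W = r / A := by
  set φ : ℝ → ℝ := fun t => α * log (V + t * p) + (1 - α) * log (W + t * q) - log (A + t * r)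
  set g : ℝ → ℝ := fun t => α * (p / (V + t * p)) + (1 - α) * (q / (W + t * q)) - r / (A + t * r)
  have hφ : φ =ᶠ[𝓝 0] 0 := h.mono fun t ht => by simp [φ, ht]
  have hne (c s : ℝ) (hc : c ≠ 0) : ∀ᶠ t in 𝓝 0, c + t * s ≠ 0 :=
    (by fun_prop : Continuous fun t : ℝ => c + t * s).continuousAt.eventually_ne
      (by simpa using hc)
  have hφ' : ∀ᶠ t in 𝓝 0, HasDerivAt φ (g t) t := by
    filter_upwards [hne V p hV, hne W q hW, hne A r hA] with t hVt hWt hAt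
    exact (((hasDerivAt_log_affine hVt).const_mul α).add
      ((hasDerivAt_log_affine hWt).const_mul (1 - α))).sub (hasDerivAt_log_affine hAt)
  have hg : g =ᶠ[𝓝 0] 0 := by
    filter_upwards [hφ', hφ.eventually_nhds] with t hφt hφ0
    exact hφt.unique ((hasDerivAt_const t 0).congr_of_eventuallyEq hφ0)
  have hg' : HasDerivAt g (α * -(p / V) ^ 2 + (1 - α) * -(q / W) ^ 2 - -(r / A) ^ 2) 0 :=
    (((hasDerivAt_div_affine p hV).const_mul α).add
      ((hasDerivAt_div_affine q hW).const_mul (1 - α))).sub (hasDerivAt_div_affine r hA)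
  have hmean : r / A = α * (p / V) + (1 - α) * (q / W) := by
    have := hg.eq_of_nhds
    simp only [g, zero_mul, add_zero, Pi.zero_apply] at this
    linarith
  have hsq : (r / A) ^ 2 = α * (p / V) ^ 2 + (1 - α) * (q / W) ^ 2 := by
    have := hg'.unique ((hasDerivAt_const 0 0).congr_of_eventuallyEq hg)
    linarith
  have hPQ := eq_of_sq_convexComb_eq_convexComb_sq hα (hmean ▸ hsq)
  rw [hmean, ← hPQ]
  constructor <;> ring

theorem div_dotProduct_eq_of_log_eq_convexComb_log {ι : Type*} [Fintype ι]
    {a v w x₀ y : ι → ℝ} {α : ℝ} {D : Set (ι → ℝ)} (hα : α ∈ Ioo 0 1)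
    (hA : a ⬝ᵥ x₀ ≠ 0) (hV : v ⬝ᵥ x₀ ≠ 0) (hW : w ⬝ᵥ x₀ ≠ 0)
    (heq : ∀ x ∈ D, log (a ⬝ᵥ x) = α * log (v ⬝ᵥ x) + (1 - α) * log (w ⬝ᵥ x))
    (hseg : ∀ᶠ t in 𝓝 (0 : ℝ), x₀ + t • (y - x₀) ∈ D) :
    v ⬝ᵥ y / v ⬝ᵥ x₀ = a ⬝ᵥ y / a ⬝ᵥ x₀ ∧ w ⬝ᵥ y / w ⬝ᵥ x₀ = a ⬝ᵥ y / a ⬝ᵥ x₀ := by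
  have hline (c : ι → ℝ) (t : ℝ) :
      c ⬝ᵥ (x₀ + t • (y - x₀)) = c ⬝ᵥ x₀ + t * (c ⬝ᵥ y - c ⬝ᵥ x₀) := by
    simp [dotProduct_add, dotProduct_smul, dotProduct_sub]
  have h1 := div_eq_div_of_log_eq_convexComb_log hα hA hV hW
    (hseg.mono fun t ht => by simpa only [hline] using heq _ ht)
  simpa only [sub_div, div_self hA, div_self hV, div_self hW, sub_left_inj] using h1

lemma eventually_add_smul_sub_mem_openSimplex {d : ℕ} {U : Set (Fin d → ℝ)} (hU : IsOpen U)
    {x₀ y : Fin d → ℝ} (hx₀ : x₀ ∈ U ∩ openSimplex d) (hy : ∑ i, y i = 1) :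
    ∀ᶠ t in 𝓝 (0 : ℝ), x₀ + t • (y - x₀) ∈ U ∩ openSimplex d := by
  have hopen : IsOpen (U ∩ {x : Fin d → ℝ | ∀ i, 0 < x i}) := by
    simpa only [Set.ofPred_forall] using
      hU.inter (isOpen_iInter_of_finite fun i => isOpen_lt continuous_const (continuous_apply i))
  have hcont : ContinuousAt (fun t : ℝ => x₀ + t • (y - x₀)) 0 := by fun_prop
  have hnhds := hcont.preimage_mem_nhds
    (hopen.mem_nhds (by simpa using ⟨hx₀.1, hx₀.2.1⟩))
  filter_upwards [hnhds] with t ht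
  refine ⟨ht.1, ht.2, ?_⟩
  simp only [Pi.add_apply, Pi.smul_apply, Pi.sub_apply, smul_eq_mul, Finset.sum_add_distrib,
    ← Finset.mul_sum, Finset.sum_sub_distrib, hy, hx₀.2.2]
  ring

lemma dotProduct_pos_of_mem_openSimplex {d : ℕ} {c x : Fin d → ℝ} (hc : ∀ i, 0 < c i)
    (hx : x ∈ openSimplex d) : 0 < c ⬝ᵥ x :=
  Finset.sum_pos (fun i _ => mul_pos (hc i) (hx.1 i))
    (Finset.nonempty_of_sum_ne_zero (by rw [hx.2]; exact one_ne_zero))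

theorem statement7_general {d : ℕ}
    (a v w : Fin d → ℝ)
    (ha : ∀ i, 0 < a i) (hv : ∀ i, 0 < v i) (hw : ∀ i, 0 < w i)
    (α : ℝ) (hα : α ∈ Set.Ioo (0:ℝ) 1)
    (D : Set (Fin d → ℝ)) (hDne : D.Nonempty)
    (hDopen : ∃ U : Set (Fin d → ℝ), IsOpen U ∧ D = U ∩ openSimplex d)
    (heq : ∀ x ∈ D,
      Real.log (∑ i, a i * x i)
        = α * Real.log (∑ i, v i * x i) + (1 - α) * Real.log (∑ i, w i * x i)) :
    ∃ c₁ c₂ : ℝ, 0 < c₁ ∧ 0 < c₂ ∧ (∀ i, a i = c₁ * v i) ∧ (∀ i, a i = c₂ * w i) := by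
  obtain ⟨U, hU, rfl⟩ := hDopen
  obtain ⟨x₀, hx₀⟩ := hDne
  have hA := dotProduct_pos_of_mem_openSimplex ha hx₀.2
  have hV := dotProduct_pos_of_mem_openSimplex hv hx₀.2
  have hW := dotProduct_pos_of_mem_openSimplex hw hx₀.2
  have hratio (i : Fin d) :=
    div_dotProduct_eq_of_log_eq_convexComb_log hα hA.ne' hV.ne' hW.ne' heq
      (eventually_add_smul_sub_mem_openSimplex hU hx₀ (y := Pi.single i 1) (by simp))
  simp only [dotProduct_single, mul_one] at hratio
  refine ⟨a ⬝ᵥ x₀ / v ⬝ᵥ x₀, a ⬝ᵥ x₀ / w ⬝ᵥ x₀, div_pos hA hV, div_pos hA hW,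
    fun i => ?_, fun i => ?_⟩
  · rw [div_mul_comm, (hratio i).1, div_mul_cancel₀ _ hA.ne']
  · rw [div_mul_comm, (hratio i).2, div_mul_cancel₀ _ hA.ne']

/-- if `log(aᵀx) = α log(vᵀx) + (1-α) log(wᵀx)` on a nonempty relatively open
subset `D` of the open simplex, with `a, v, w` having strictly positive coordinates and
`α ∈ (0,1)`, then `a` is a positive multiple of both `v` and `w`. -/
theorem statement7 {d : ℕ} (hd : 2 ≤ d)
    (a v w : Fin d → ℝ)
    (ha : ∀ i, 0 < a i) (hv : ∀ i, 0 < v i) (hw : ∀ i, 0 < w i)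
    (α : ℝ) (hα : α ∈ Set.Ioo (0:ℝ) 1)
    (D : Set (Fin d → ℝ)) (hDne : D.Nonempty)
    (hDopen : ∃ U : Set (Fin d → ℝ), IsOpen U ∧ D = U ∩ openSimplex d)
    (heq : ∀ x ∈ D,
      Real.log (∑ i, a i * x i)
        = α * Real.log (∑ i, v i * x i) + (1 - α) * Real.log (∑ i, w i * x i)) :
    ∃ c₁ c₂ : ℝ, 0 < c₁ ∧ 0 < c₂ ∧ (∀ i, a i = c₁ * v i) ∧ (∀ i, a i = c₂ * w i) :=
  statement7_general a v w ha hv hw α hα D hDne hDopen heq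
end

section
/- Let n ≥ 1, let w_1,…,w_n ∈ ℝ^d have strictly positive coordinates, and define g(x) := min_{1≤k≤n} log(w_kᵀ x) for x ∈ Δ. Suppose α ∈ (0,1) and ψ, φ : Δ → ℝ are exponentially concave functions with g(x) = α ψ(x) + (1−α) φ(x) for every x ∈ Δ. Then there exist constants c₁, c₂ ∈ ℝ with α c₁ + (1−α) c₂ = 0 such that ψ(x) = g(x) + c₁ and φ(x) = g(x) + c₂ for every x ∈ Δ. In particular, every minimum of finitely many log-affine functions is an extreme point of the set of exponentially concave functions modulo additive constants. -/
open scoped BigOperators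

/-- `x ↦ min_{1 ≤ k ≤ n} log (w_kᵀ x)`, the minimum of finitely many log-affine functions. -/
noncomputable def minLogAffine {d n : ℕ} (w : Fin (n + 1) → Fin d → ℝ)
    (x : Fin d → ℝ) : ℝ :=
  Finset.univ.inf' Finset.univ_nonempty (fun k => Real.log (∑ i, w k i * x i))

/-!
With `F = e^ψ` and `G = e^φ` concave, their weighted geometric mean `F^α G^(1-α) = e^g` is the
minimum of the linear forms `x ↦ w_kᵀx`. If one form attains the minimum at both ends of a segment,
`e^g` is affine there, while concavity and the strict Hölder inequality make the geometric mean at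
the midpoint strictly larger unless `F / G` agrees at the two ends. Near any point the minimizing
indices are among those of the point itself, so `F / G` is locally constant, hence constant on the
connected simplex; `ψ - φ` is then constant, which together with `g = αψ + (1-α)φ` gives the
constants `c₁, c₂`.
-/

open Real

lemma rpow_mul_rpow_one_sub_eq {u v : ℝ} (hu : 0 ≤ u) (hv : 0 < v) (α : ℝ) :
    u ^ α * v ^ (1 - α) = v * (u / v) ^ α := by
  rw [div_rpow hu hv.le, rpow_sub hv, rpow_one]
  field_simp

lemma rpow_mul_rpow_add_rpow_mul_rpow_lt {A B C D α : ℝ} (hA : 0 < A) (hB : 0 < B)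
    (hC : 0 < C) (hD : 0 < D) (hα₀ : 0 < α) (hα₁ : α < 1) (hne : A * D ≠ B * C) :
    A ^ α * C ^ (1 - α) + B ^ α * D ^ (1 - α) < (A + B) ^ α * (C + D) ^ (1 - α) := by
  have hCD : 0 < C + D := by positivity
  have hratio : A / C ≠ B / D := by
    rwa [Ne, div_eq_div_iff hC.ne' hD.ne']
  have key := (strictConcaveOn_rpow hα₀ hα₁).2 (Set.mem_Ici.2 (by positivity))
    (Set.mem_Ici.2 (by positivity)) hratio (div_pos hC hCD) (div_pos hD hCD)
    (by field_simp)
  have hmix : C / (C + D) * (A / C) + D / (C + D) * (B / D) = (A + B) / (C + D) := by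
    field_simp
  simp only [smul_eq_mul, hmix] at key
  rw [rpow_mul_rpow_one_sub_eq hA.le hC, rpow_mul_rpow_one_sub_eq hB.le hD,
    rpow_mul_rpow_one_sub_eq (by positivity) hCD]
  calc C * (A / C) ^ α + D * (B / D) ^ α
      = (C + D) * (C / (C + D) * (A / C) ^ α + D / (C + D) * (B / D) ^ α) := by
        field_simp
    _ < (C + D) * ((A + B) / (C + D)) ^ α := mul_lt_mul_of_pos_left key hCD

section MinOfLinear

open Finset Filter Topology

variable {E ι : Type*} [AddCommGroup E] [Module ℝ E] [TopologicalSpace E] [Fintype ι]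
  [Nonempty ι] {L : ι → E →L[ℝ] ℝ} {s : Set E} {F G : E → ℝ} {α : ℝ}

lemma div_eq_div_of_common_minimizer (hF : ConcaveOn ℝ s F) (hG : ConcaveOn ℝ s G)
    (hF₀ : ∀ x ∈ s, 0 < F x) (hG₀ : ∀ x ∈ s, 0 < G x) (hα₀ : 0 < α) (hα₁ : α < 1)
    (hmean : ∀ x ∈ s, F x ^ α * G x ^ (1 - α) = univ.inf' univ_nonempty fun k => L k x)
    {x y : E} (hx : x ∈ s) (hy : y ∈ s) {k : ι}
    (hkx : L k x = univ.inf' univ_nonempty fun j => L j x)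
    (hky : L k y = univ.inf' univ_nonempty fun j => L j y) :
    F x / G x = F y / G y := by
  by_contra hne
  rw [div_eq_div_iff (hG₀ x hx).ne' (hG₀ y hy).ne'] at hne
  set z := (1 / 2 : ℝ) • x + (1 / 2 : ℝ) • y
  have hz : z ∈ s := hF.1 hx hy (by norm_num) (by norm_num) (by norm_num)
  have hFz : (F x + F y) / 2 ≤ F z := by
    have := hF.2 hx hy (by norm_num : (0 : ℝ) ≤ 1 / 2) (by norm_num : (0 : ℝ) ≤ 1 / 2)
      (by norm_num)
    simp only [smul_eq_mul] at this
    linarith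
  have hGz : (G x + G y) / 2 ≤ G z := by
    have := hG.2 hx hy (by norm_num : (0 : ℝ) ≤ 1 / 2) (by norm_num : (0 : ℝ) ≤ 1 / 2)
      (by norm_num)
    simp only [smul_eq_mul] at this
    linarith
  have hFx := hF₀ x hx; have hFy := hF₀ y hy; have hGx := hG₀ x hx; have hGy := hG₀ y hy
  have hhalf : ((F x + F y) / 2) ^ α * ((G x + G y) / 2) ^ (1 - α)
      = (F x + F y) ^ α * (G x + G y) ^ (1 - α) / 2 := by
    rw [rpow_mul_rpow_one_sub_eq (by positivity) (by positivity),
      rpow_mul_rpow_one_sub_eq (by positivity) (by positivity),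
      div_div_div_cancel_right₀ two_ne_zero]
    ring
  have hholder := rpow_mul_rpow_add_rpow_mul_rpow_lt hFx hFy hGx hGy hα₀ hα₁ hne
  have : (F x + F y) ^ α * (G x + G y) ^ (1 - α) / 2
      < (F x + F y) ^ α * (G x + G y) ^ (1 - α) / 2 :=
    calc _ = ((F x + F y) / 2) ^ α * ((G x + G y) / 2) ^ (1 - α) := hhalf.symm
      _ ≤ F z ^ α * G z ^ (1 - α) := by
        gcongr
        exact rpow_nonneg (hF₀ z hz).le _
      _ = univ.inf' univ_nonempty fun j => L j z := hmean z hz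
      _ ≤ L k z := inf'_le _ (mem_univ k)
      _ = (L k x + L k y) / 2 := by simp only [z, map_add, map_smul, smul_eq_mul]; ring
      _ = (F x ^ α * G x ^ (1 - α) + F y ^ α * G y ^ (1 - α)) / 2 := by
        rw [hkx, hky, hmean x hx, hmean y hy]
      _ < _ := by linarith
  exact lt_irrefl _ this

lemma eventually_minimizers_subset (x₀ : E) :
    ∀ᶠ x in 𝓝 x₀, ∀ k, L k x = (univ.inf' univ_nonempty fun j => L j x) →
      L k x₀ = univ.inf' univ_nonempty fun j => L j x₀ := by
  refine eventually_all.2 fun k => ?_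
  obtain ⟨j, -, hj⟩ := exists_mem_eq_inf' univ_nonempty fun j => L j x₀
  rcases (inf'_le (fun j => L j x₀) (mem_univ k)).eq_or_lt with hk | hk
  · exact Eventually.of_forall fun _ _ => hk.symm
  · rw [hj] at hk
    filter_upwards [(isOpen_lt (L j).continuous (L k).continuous).mem_nhds hk] with x hx hkx
    exact absurd (hkx.trans_le (inf'_le _ (mem_univ j))) (not_le.2 hx)

theorem div_eq_div_of_rpow_mul_rpow_eq_inf' [ContinuousAdd E] [ContinuousSMul ℝ E]
    (hF : ConcaveOn ℝ s F) (hG : ConcaveOn ℝ s G)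
    (hF₀ : ∀ x ∈ s, 0 < F x) (hG₀ : ∀ x ∈ s, 0 < G x) (hα₀ : 0 < α) (hα₁ : α < 1)
    (hmean : ∀ x ∈ s, F x ^ α * G x ^ (1 - α) = univ.inf' univ_nonempty fun k => L k x)
    {x y : E} (hx : x ∈ s) (hy : y ∈ s) :
    F x / G x = F y / G y := by
  refine hF.1.isPreconnected.induction₂' (fun x y => F x / G x = F y / G y)
    (fun x₀ hx₀ => ?_) (fun _ _ _ _ _ _ => Eq.trans) hx hy
  filter_upwards [self_mem_nhdsWithin, eventually_nhdsWithin_of_eventually_nhds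
    (eventually_minimizers_subset (L := L) x₀)] with x hxs hsub
  obtain ⟨k, -, hk⟩ := exists_mem_eq_inf' univ_nonempty fun j => L j x
  have h := div_eq_div_of_common_minimizer hF hG hF₀ hG₀ hα₀ hα₁ hmean hx₀ hxs (hsub k hk.symm)
    hk.symm
  exact ⟨h, h.symm⟩

end MinOfLinear

lemma sum_mul_pos_of_mem_openSimplex {d : ℕ} {v x : Fin d → ℝ} (hv : ∀ i, 0 < v i)
    (hx : x ∈ openSimplex d) : 0 < ∑ i, v i * x i :=
  Finset.sum_pos (fun i _ => mul_pos (hv i) (hx.1 i))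
    (Finset.nonempty_of_sum_ne_zero (hx.2.symm ▸ one_ne_zero))

lemma exp_minLogAffine {d n : ℕ} {w : Fin (n + 1) → Fin d → ℝ} {x : Fin d → ℝ}
    (hpos : ∀ k, 0 < ∑ i, w k i * x i) :
    exp (minLogAffine w x)
      = Finset.univ.inf' Finset.univ_nonempty fun k => ∑ i, w k i * x i := by
  rw [minLogAffine, Finset.apply_inf'_eq_inf'_comp _ _ fun _ _ => exp_monotone.map_min]
  exact Finset.inf'_congr _ rfl fun k _ => exp_log (hpos k)

theorem statement8_general {d : ℕ} (n : ℕ)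
    (w : Fin (n + 1) → Fin d → ℝ) (hw : ∀ k i, 0 < w k i)
    (α : ℝ) (hα : α ∈ Set.Ioo (0:ℝ) 1)
    (ψ φ : (Fin d → ℝ) → ℝ) (hψ : ExpConcave ψ) (hφ : ExpConcave φ)
    (heq : ∀ x ∈ openSimplex d, minLogAffine w x = α * ψ x + (1 - α) * φ x) :
    ∃ c₁ c₂ : ℝ, α * c₁ + (1 - α) * c₂ = 0 ∧
      ∀ x ∈ openSimplex d, ψ x = minLogAffine w x + c₁ ∧ φ x = minLogAffine w x + c₂ := by
  rcases (openSimplex d).eq_empty_or_nonempty with hempty | ⟨x₀, hx₀⟩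
  · exact ⟨0, 0, by ring, by simp [hempty]⟩
  let L : Fin (n + 1) → (Fin d → ℝ) →L[ℝ] ℝ := fun k => ∑ i, w k i • ContinuousLinearMap.proj i
  have hmean : ∀ x ∈ openSimplex d, exp (ψ x) ^ α * exp (φ x) ^ (1 - α)
      = Finset.univ.inf' Finset.univ_nonempty fun k => L k x := by
    intro x hx
    rw [← exp_mul, ← exp_mul, ← exp_add, mul_comm, mul_comm _ (1 - α), ← heq x hx,
      exp_minLogAffine fun k => sum_mul_pos_of_mem_openSimplex (hw k) hx]
    simp [L]
  have hdiff : ∀ x ∈ openSimplex d, ψ x - φ x = ψ x₀ - φ x₀ := fun x hx => by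
    have := div_eq_div_of_rpow_mul_rpow_eq_inf' hψ hφ (fun _ _ => exp_pos _)
      (fun _ _ => exp_pos _) hα.1 hα.2 hmean hx hx₀
    rwa [← exp_sub, ← exp_sub, exp_eq_exp] at this
  refine ⟨(1 - α) * (ψ x₀ - φ x₀), -(α * (ψ x₀ - φ x₀)), by ring, fun x hx => ⟨?_, ?_⟩⟩
  · linear_combination (1 - α) * hdiff x hx - heq x hx
  · linear_combination -α * hdiff x hx - heq x hx

/-- if a minimum `g` of finitely many log-affine functions (with strictly
positive coefficient vectors) is a convex combination `g = α ψ + (1-α) φ` of exponentially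
concave functions on the simplex, then `ψ` and `φ` differ from `g` by additive constants
`c₁, c₂` with `α c₁ + (1-α) c₂ = 0`.  In particular `g` is an extreme point of the set of
exponentially concave functions modulo additive constants. -/
theorem statement8 {d : ℕ} (hd : 2 ≤ d) (n : ℕ)
    (w : Fin (n + 1) → Fin d → ℝ) (hw : ∀ k i, 0 < w k i)
    (α : ℝ) (hα : α ∈ Set.Ioo (0:ℝ) 1)
    (ψ φ : (Fin d → ℝ) → ℝ) (hψ : ExpConcave ψ) (hφ : ExpConcave φ)
    (heq : ∀ x ∈ openSimplex d, minLogAffine w x = α * ψ x + (1 - α) * φ x) :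
    ∃ c₁ c₂ : ℝ, α * c₁ + (1 - α) * c₂ = 0 ∧
      ∀ x ∈ openSimplex d, ψ x = minLogAffine w x + c₁ ∧ φ x = minLogAffine w x + c₂ :=
  statement8_general n w hw α hα ψ φ hψ hφ heq
end

section
/- Let ℓ : (0,1) → ℝ be continuously differentiable. Define φ : (0,1) → ℝ by φ(x) = 1/x if ℓ(x) > 1/x, φ(x) = −1/(1−x) if ℓ(x) < −1/(1−x), and φ(x) = ℓ(x) otherwise; fix θ ∈ (0,1) and set Ĝ(x) := exp(∫_θ^x φ(y) dy). Let A := {x ∈ (0,1) : −1/(1−x) < ℓ(x) < 1/x}. Then Ĝ is concave on (0,1) if and only if ℓ(x)² + ℓ′(x) ≤ 0 for every x ∈ A. -/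
open scoped BigOperators

/-- The clipped drift function: `φ(x) = 1/x` if `ℓ(x) > 1/x`, `φ(x) = -1/(1-x)` if
`ℓ(x) < -1/(1-x)`, and `φ(x) = ℓ(x)` otherwise. -/
noncomputable def clipEll (ℓ : ℝ → ℝ) (x : ℝ) : ℝ :=
  if 1 / x < ℓ x then 1 / x
  else if ℓ x < -(1 / (1 - x)) then -(1 / (1 - x))
  else ℓ x

/-- `Ĝ(x) = exp(∫_θ^x φ(y) dy)`, the generating function of the optimal long-only
portfolio in feedback form in dimension 2. -/
noncomputable def Ghat (ℓ : ℝ → ℝ) (θ : ℝ) (x : ℝ) : ℝ :=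
  Real.exp (∫ y in θ..x, clipEll ℓ y)

open Set Filter Topology

/-!
Since `Ĝ' = φ Ĝ`, concavity of `Ĝ` means that `F = φ Ĝ` is antitone. On the open set `A` where `ℓ`
is not clipped, `F = ℓ Ĝ` has derivative `(ℓ' + ℓ²) Ĝ`, which gives necessity.

For sufficiency, the bounds `h = 1/x` and `h = -1/(1-x)` solve `h' + h² = 0`, so `Ĝ/x` and
`-Ĝ/(1-x)` are antitone, and `-Ĝ/(1-x) ≤ F ≤ Ĝ/x`. Hence at a point clipped from above `F` is
nowhere larger to the right, at a point clipped from below it is nowhere smaller to the left, and at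
a point of `A` it is locally antitone. A continuous function with one of these properties at every
point is antitone: if `F x < F y`, no point beyond the last `t ∈ [x, y]` with `F t ≤ F x` can be of
the second kind, so `F` does not increase to the right anywhere on `(t, y)` and `F y ≤ F t`.
-/

section AntitoneOfLocal

variable {α β : Type*} [ConditionallyCompleteLinearOrder α] [TopologicalSpace α] [OrderTopology α]
  [DenselyOrdered α] [LinearOrder β] [TopologicalSpace β] [OrderClosedTopology β]
  {f : α → β} {a b : α}

theorem le_of_forall_mem_Ico_eventually_le (hab : a ≤ b) (hf : ContinuousOn f (Icc a b))
    (h : ∀ z ∈ Ico a b, ∀ᶠ w in 𝓝[>] z, f w ≤ f z) : f b ≤ f a := by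
  have hclosed : IsClosed ({z | f z ≤ f a} ∩ Icc a b) := by
    rw [inter_comm]
    exact hf.preimage_isClosed_of_isClosed isClosed_Icc isClosed_Iic
  refine hclosed.Icc_subset_of_forall_mem_nhdsWithin (le_refl (f a)) (fun z hz => ?_)
    ⟨hab, le_rfl⟩
  exact (h z hz.2).mono fun w hw => hw.trans hz.1

theorem le_of_forall_mem_Ioo_eventually_le (hab : a ≤ b)
    (hf : ContinuousOn f (Icc a b)) (h : ∀ z ∈ Ioo a b, ∀ᶠ w in 𝓝[>] z, f w ≤ f z) :
    f b ≤ f a := by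
  rcases hab.eq_or_lt with rfl | hab
  · exact le_rfl
  have : (𝓝[>] a).NeBot := nhdsGT_neBot_of_exists_gt ⟨b, hab⟩
  have hlim : Tendsto f (𝓝[>] a) (𝓝 (f a)) := by
    rw [← nhdsWithin_Ioo_eq_nhdsGT hab]
    exact (hf a ⟨le_rfl, hab.le⟩).mono Ioo_subset_Icc_self
  refine ge_of_tendsto hlim ?_
  filter_upwards [Ioo_mem_nhdsGT hab] with a' ha'
  exact le_of_forall_mem_Ico_eventually_le ha'.2.le (hf.mono (Icc_subset_Icc_left ha'.1.le))
    fun z hz => h z ⟨ha'.1.trans_le hz.1, hz.2⟩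

theorem antitoneOn_of_eventually_le_or_forall_lt_le {s : Set α}
    (hs : s.OrdConnected) (hf : ContinuousOn f s)
    (h : ∀ z ∈ s, (∀ᶠ w in 𝓝[>] z, f w ≤ f z) ∨ ∀ v ∈ s, v < z → f z ≤ f v) :
    AntitoneOn f s := by
  intro x hx y hy hxy
  by_contra! hlt
  set S := Icc x y ∩ f ⁻¹' Iic (f x)
  have hS : IsClosed S := (hf.mono (hs.out hx hy)).preimage_isClosed_of_isClosed isClosed_Icc
    isClosed_Iic
  have hbdd : BddAbove S := ⟨y, fun z hz => hz.1.2⟩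
  have htS : sSup S ∈ S := hS.csSup_mem ⟨x, ⟨le_rfl, hxy⟩, le_refl (f x)⟩ hbdd
  set t := sSup S
  obtain ⟨⟨hxt, hty⟩, hft : f t ≤ f x⟩ := htS
  have hgt : ∀ w ∈ Ioc t y, f x < f w := fun w hw => by
    by_contra! hw'
    exact (le_csSup hbdd ⟨⟨hxt.trans hw.1.le, hw.2⟩, hw'⟩).not_gt hw.1
  have hst : Icc t y ⊆ s := hs.out (hs.out hx hy ⟨hxt, hty⟩) hy
  have : f y ≤ f t := by
    refine le_of_forall_mem_Ioo_eventually_le hty (hf.mono hst) fun z hz => ?_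
    refine (h z (hst (Ioo_subset_Icc_self hz))).resolve_right fun hleft => ?_
    exact (hleft t (hst ⟨le_rfl, hty⟩) hz.1).not_gt
      (hft.trans_lt (hgt z (Ioo_subset_Ioc_self hz)))
  exact (this.trans hft).not_gt hlt

end AntitoneOfLocal

theorem eventually_nhdsGT_le_of_eventually_hasDerivAt_nonpos {f f' : ℝ → ℝ} {z : ℝ}
    (h : ∀ᶠ w in 𝓝 z, HasDerivAt f (f' w) w ∧ f' w ≤ 0) : ∀ᶠ w in 𝓝[>] z, f w ≤ f z := by
  obtain ⟨ε, hε, hball⟩ := Metric.eventually_nhds_iff_ball.1 h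
  have hanti : AntitoneOn f (Metric.ball z ε) := by
    refine antitoneOn_of_hasDerivWithinAt_nonpos (f' := f') (convex_ball z ε)
      (fun w hw => (hball w hw).1.continuousAt.continuousWithinAt) (fun w hw => ?_) fun w hw => ?_
    · exact (hball w (interior_subset hw)).1.hasDerivWithinAt
    · exact (hball w (interior_subset hw)).2
  filter_upwards [mem_nhdsWithin_of_mem_nhds (Metric.ball_mem_nhds z hε), self_mem_nhdsWithin]
    with w hw hzw
  exact hanti (Metric.mem_ball_self hε) hw (le_of_lt hzw)

section Clip

variable {ℓ : ℝ → ℝ} {x : ℝ}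

theorem neg_one_div_one_sub_lt_one_div (hx : x ∈ Ioo (0 : ℝ) 1) : -(1 / (1 - x)) < 1 / x :=
  (neg_neg_of_pos (one_div_pos.2 (sub_pos.2 hx.2))).trans (one_div_pos.2 hx.1)

theorem clipEll_eq_min_max (hx : x ∈ Ioo (0 : ℝ) 1) :
    clipEll ℓ x = min (1 / x) (max (ℓ x) (-(1 / (1 - x)))) := by
  have hb := neg_one_div_one_sub_lt_one_div hx
  unfold clipEll
  split_ifs with hup hlow
  · rw [max_eq_left (hb.trans hup).le, min_eq_left hup.le]
  · rw [max_eq_right hlow.le, min_eq_right hb.le]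
  · rw [max_eq_left (not_lt.1 hlow), min_eq_right (not_lt.1 hup)]

theorem clipEll_le (hx : x ∈ Ioo (0 : ℝ) 1) : clipEll ℓ x ≤ 1 / x :=
  (clipEll_eq_min_max hx).trans_le (min_le_left _ _)

theorem le_clipEll (hx : x ∈ Ioo (0 : ℝ) 1) : -(1 / (1 - x)) ≤ clipEll ℓ x := by
  rw [clipEll_eq_min_max hx]
  exact le_min (neg_one_div_one_sub_lt_one_div hx).le (le_max_right _ _)

theorem clipEll_of_one_div_le (hx : x ∈ Ioo (0 : ℝ) 1) (h : 1 / x ≤ ℓ x) :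
    clipEll ℓ x = 1 / x := by
  rw [clipEll_eq_min_max hx, max_eq_left ((neg_one_div_one_sub_lt_one_div hx).le.trans h),
    min_eq_left h]

theorem clipEll_of_le_neg_one_div (hx : x ∈ Ioo (0 : ℝ) 1) (h : ℓ x ≤ -(1 / (1 - x))) :
    clipEll ℓ x = -(1 / (1 - x)) := by
  rw [clipEll_eq_min_max hx, max_eq_right h, min_eq_right (neg_one_div_one_sub_lt_one_div hx).le]

theorem clipEll_of_lt_of_lt (h₁ : -(1 / (1 - x)) < ℓ x) (h₂ : ℓ x < 1 / x) :
    clipEll ℓ x = ℓ x := by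
  rw [clipEll, if_neg h₂.not_gt, if_neg h₁.not_gt]

theorem continuousOn_clipEll (hc : ContinuousOn ℓ (Ioo 0 1)) :
    ContinuousOn (clipEll ℓ) (Ioo 0 1) := by
  have hx : ContinuousOn (fun x : ℝ => 1 / x) (Ioo 0 1) :=
    continuousOn_const.div continuousOn_id fun x hx => hx.1.ne'
  have hx' : ContinuousOn (fun x : ℝ => -(1 / (1 - x))) (Ioo 0 1) :=
    (continuousOn_const.div (continuousOn_const.sub continuousOn_id)
      fun x hx => (sub_pos.2 hx.2).ne').neg
  exact (hx.inf (hc.sup hx')).congr fun x hx => clipEll_eq_min_max hx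

theorem eventually_unclipped_nhds (hc : ContinuousOn ℓ (Ioo 0 1)) (hx : x ∈ Ioo (0 : ℝ) 1)
    (h₁ : -(1 / (1 - x)) < ℓ x) (h₂ : ℓ x < 1 / x) :
    ∀ᶠ y in 𝓝 x, y ∈ Ioo (0 : ℝ) 1 ∧ -(1 / (1 - y)) < ℓ y ∧ ℓ y < 1 / y := by
  have hcℓ : ContinuousAt ℓ x := hc.continuousAt (isOpen_Ioo.mem_nhds hx)
  have hup : ContinuousAt (fun y : ℝ => 1 / y) x :=
    continuousAt_const.div continuousAt_id hx.1.ne'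
  have hlow : ContinuousAt (fun y : ℝ => -(1 / (1 - y))) x :=
    (continuousAt_const.div (continuousAt_const.sub continuousAt_id) (sub_pos.2 hx.2).ne').neg
  exact (isOpen_Ioo.eventually_mem hx).and
    ((hlow.eventually_lt hcℓ h₁).and (hcℓ.eventually_lt hup h₂))

end Clip

section Ghat

variable {ℓ : ℝ → ℝ} {θ x : ℝ}

theorem Ghat_pos : 0 < Ghat ℓ θ x := Real.exp_pos _

theorem hasDerivAt_Ghat (hc : ContinuousOn ℓ (Ioo 0 1)) (hθ : θ ∈ Ioo (0 : ℝ) 1)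
    (hx : x ∈ Ioo (0 : ℝ) 1) : HasDerivAt (Ghat ℓ θ) (clipEll ℓ x * Ghat ℓ θ x) x := by
  have hφ := continuousOn_clipEll hc
  have hint : HasDerivAt (fun u => ∫ y in θ..u, clipEll ℓ y) (clipEll ℓ x) x :=
    intervalIntegral.integral_hasDerivAt_right
      ((hφ.mono (ordConnected_Ioo.uIcc_subset hθ hx)).intervalIntegrable)
      (hφ.stronglyMeasurableAtFilter isOpen_Ioo x hx)
      (hφ.continuousAt (isOpen_Ioo.mem_nhds hx))
  rw [mul_comm]
  exact hint.exp

theorem continuousOn_Ghat (hc : ContinuousOn ℓ (Ioo 0 1)) (hθ : θ ∈ Ioo (0 : ℝ) 1) :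
    ContinuousOn (Ghat ℓ θ) (Ioo 0 1) := fun _ hx =>
  (hasDerivAt_Ghat hc hθ hx).continuousAt.continuousWithinAt

theorem continuousOn_clipEll_mul_Ghat (hc : ContinuousOn ℓ (Ioo 0 1)) (hθ : θ ∈ Ioo (0 : ℝ) 1) :
    ContinuousOn (fun x => clipEll ℓ x * Ghat ℓ θ x) (Ioo 0 1) :=
  (continuousOn_clipEll hc).mul (continuousOn_Ghat hc hθ)

/-- `(h Ĝ)' = (h' + h φ) Ĝ`; the clipping bounds `1/x` and `-1/(1-x)` solve `h' + h² = 0`, the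
equality case of `ℓ' + ℓ² ≤ 0`. -/
theorem antitoneOn_mul_Ghat {h : ℝ → ℝ} (hc : ContinuousOn ℓ (Ioo 0 1))
    (hθ : θ ∈ Ioo (0 : ℝ) 1) (hh : ∀ x ∈ Ioo (0 : ℝ) 1, HasDerivAt h (-h x ^ 2) x)
    (hφ : ∀ x ∈ Ioo (0 : ℝ) 1, h x * (clipEll ℓ x - h x) ≤ 0) :
    AntitoneOn (fun x => h x * Ghat ℓ θ x) (Ioo 0 1) := by
  refine antitoneOn_of_hasDerivWithinAt_nonpos (convex_Ioo 0 1)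
    (f' := fun x => h x * (clipEll ℓ x - h x) * Ghat ℓ θ x)
    (fun x hx => ((hh x hx).mul (hasDerivAt_Ghat hc hθ hx)).continuousAt.continuousWithinAt)
    (fun x hx => ?_) fun x hx => ?_
  · rw [interior_Ioo] at hx ⊢
    exact (((hh x hx).mul (hasDerivAt_Ghat hc hθ hx)).congr_deriv (by ring)).hasDerivWithinAt
  · rw [interior_Ioo] at hx
    exact mul_nonpos_of_nonpos_of_nonneg (hφ x hx) Ghat_pos.le

theorem antitoneOn_one_div_mul_Ghat (hc : ContinuousOn ℓ (Ioo 0 1)) (hθ : θ ∈ Ioo (0 : ℝ) 1) :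
    AntitoneOn (fun x => 1 / x * Ghat ℓ θ x) (Ioo 0 1) := by
  refine antitoneOn_mul_Ghat (h := fun x => 1 / x) hc hθ (fun x hx => ?_) fun x hx => ?_
  · simp only [one_div]
    refine (hasDerivAt_inv hx.1.ne').congr_deriv ?_
    ring
  · exact mul_nonpos_of_nonneg_of_nonpos (one_div_pos.2 hx.1).le (sub_nonpos.2 (clipEll_le hx))

theorem antitoneOn_neg_one_div_one_sub_mul_Ghat (hc : ContinuousOn ℓ (Ioo 0 1))
    (hθ : θ ∈ Ioo (0 : ℝ) 1) :
    AntitoneOn (fun x => -(1 / (1 - x)) * Ghat ℓ θ x) (Ioo 0 1) := by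
  refine antitoneOn_mul_Ghat (h := fun x => -(1 / (1 - x))) hc hθ (fun x hx => ?_) fun x hx => ?_
  · have hx' : 1 - x ≠ 0 := (sub_pos.2 hx.2).ne'
    simp only [one_div]
    refine (((hasDerivAt_id' x).const_sub 1).inv hx').neg.congr_deriv ?_
    field_simp
  · exact mul_nonpos_of_nonpos_of_nonneg (neg_nonpos.2 (one_div_pos.2 (sub_pos.2 hx.2)).le)
      (sub_nonneg.2 (le_clipEll hx))

theorem hasDerivAt_clipEll_mul_Ghat (hℓ : ContDiffOn ℝ 1 ℓ (Ioo 0 1)) (hθ : θ ∈ Ioo (0 : ℝ) 1)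
    (hx : x ∈ Ioo (0 : ℝ) 1) (h₁ : -(1 / (1 - x)) < ℓ x) (h₂ : ℓ x < 1 / x) :
    HasDerivAt (fun y => clipEll ℓ y * Ghat ℓ θ y) ((deriv ℓ x + ℓ x ^ 2) * Ghat ℓ θ x) x := by
  have hℓx : HasDerivAt ℓ (deriv ℓ x) x :=
    ((hℓ.differentiableOn one_ne_zero).differentiableAt (isOpen_Ioo.mem_nhds hx)).hasDerivAt
  have heq : (fun y => clipEll ℓ y * Ghat ℓ θ y) =ᶠ[𝓝 x] fun y => ℓ y * Ghat ℓ θ y := by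
    filter_upwards [eventually_unclipped_nhds hℓ.continuousOn hx h₁ h₂] with y hy
    rw [clipEll_of_lt_of_lt hy.2.1 hy.2.2]
  have hval : (deriv ℓ x + ℓ x ^ 2) * Ghat ℓ θ x =
      deriv ℓ x * Ghat ℓ θ x + ℓ x * (clipEll ℓ x * Ghat ℓ θ x) := by
    rw [clipEll_of_lt_of_lt h₁ h₂]
    ring
  rw [hval]
  exact (hℓx.mul (hasDerivAt_Ghat hℓ.continuousOn hθ hx)).congr_of_eventuallyEq heq

theorem antitoneOn_clipEll_mul_Ghat (hℓ : ContDiffOn ℝ 1 ℓ (Ioo 0 1)) (hθ : θ ∈ Ioo (0 : ℝ) 1)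
    (hA : ∀ x ∈ Ioo (0 : ℝ) 1,
      -(1 / (1 - x)) < ℓ x → ℓ x < 1 / x → ℓ x ^ 2 + deriv ℓ x ≤ 0) :
    AntitoneOn (fun x => clipEll ℓ x * Ghat ℓ θ x) (Ioo 0 1) := by
  have hc := hℓ.continuousOn
  refine antitoneOn_of_eventually_le_or_forall_lt_le ordConnected_Ioo
    (continuousOn_clipEll_mul_Ghat hc hθ) fun z hz => ?_
  rcases le_or_gt (1 / z) (ℓ z) with hup | hup
  · left
    filter_upwards [Ioo_mem_nhdsGT hz.2] with w hw
    have hw' : w ∈ Ioo (0 : ℝ) 1 := ⟨hz.1.trans hw.1, hw.2⟩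
    rw [clipEll_of_one_div_le hz hup]
    exact (mul_le_mul_of_nonneg_right (clipEll_le hw') Ghat_pos.le).trans
      (antitoneOn_one_div_mul_Ghat hc hθ hz hw' hw.1.le)
  rcases le_or_gt (ℓ z) (-(1 / (1 - z))) with hlow | hlow
  · right
    intro v hv hvz
    rw [clipEll_of_le_neg_one_div hz hlow]
    exact (antitoneOn_neg_one_div_one_sub_mul_Ghat hc hθ hv hz hvz.le).trans
      (mul_le_mul_of_nonneg_right (le_clipEll hv) Ghat_pos.le)
  · left
    refine eventually_nhdsGT_le_of_eventually_hasDerivAt_nonpos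
      (f' := fun w => (deriv ℓ w + ℓ w ^ 2) * Ghat ℓ θ w) ?_
    filter_upwards [eventually_unclipped_nhds hc hz hlow hup] with w ⟨hw, hw₁, hw₂⟩
    refine ⟨hasDerivAt_clipEll_mul_Ghat hℓ hθ hw hw₁ hw₂, ?_⟩
    exact mul_nonpos_of_nonpos_of_nonneg (by linarith [hA w hw hw₁ hw₂]) Ghat_pos.le

end Ghat

/-- `Ĝ` is concave on `(0,1)` if and only if `ℓ² + ℓ' ≤ 0` on the set
`A = {x ∈ (0,1) : -1/(1-x) < ℓ(x) < 1/x}`. -/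
theorem statement10 (ℓ : ℝ → ℝ) (hℓ : ContDiffOn ℝ 1 ℓ (Set.Ioo 0 1))
    (θ : ℝ) (hθ : θ ∈ Set.Ioo (0:ℝ) 1) :
    ConcaveOn ℝ (Set.Ioo 0 1) (Ghat ℓ θ) ↔
      ∀ x ∈ Set.Ioo (0:ℝ) 1,
        -(1 / (1 - x)) < ℓ x → ℓ x < 1 / x → ℓ x ^ 2 + deriv ℓ x ≤ 0 := by
  have hc := hℓ.continuousOn
  have hderiv : EqOn (deriv (Ghat ℓ θ)) (fun x => clipEll ℓ x * Ghat ℓ θ x) (Ioo 0 1) :=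
    fun x hx => (hasDerivAt_Ghat hc hθ hx).deriv
  have hdiff : DifferentiableOn ℝ (Ghat ℓ θ) (Ioo 0 1) :=
    fun x hx => (hasDerivAt_Ghat hc hθ hx).differentiableAt.differentiableWithinAt
  constructor
  · intro hconc x hx h₁ h₂
    have hanti : AntitoneOn (fun x => clipEll ℓ x * Ghat ℓ θ x) (Ioo 0 1) :=
      (hconc.antitoneOn_deriv fun z hz => hdiff.differentiableAt (isOpen_Ioo.mem_nhds hz)).congr
        hderiv
    have hnonpos := (hasDerivAt_clipEll_mul_Ghat hℓ hθ hx h₁ h₂).hasDerivWithinAt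
      |>.nonpos_of_antitoneOn (isOpen_Ioo.preperfect x hx) hanti
    linarith [nonpos_of_mul_nonpos_left hnonpos Ghat_pos]
  · intro hA
    refine AntitoneOn.concaveOn_of_deriv (convex_Ioo 0 1) (continuousOn_Ghat hc hθ) ?_ ?_ <;>
      rw [interior_Ioo]
    · exact hdiff
    · exact (antitoneOn_clipEll_mul_Ghat hℓ hθ hA).congr hderiv.symm
end
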